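/- arXiv:1709.03550 — 7 statements merged into one kernel-verified Lean document; each statement's English description precedes it below -/
import Mathlib

section
/- Let G = (V, E) be a simple graph having t₁ vertices x₁, …, x_{t₁}. Assume that each edge of G is incident to one of the vertices x_i with 1 ≤ i ≤ t₂, where t₂ < t₁, and that G contains no cycle of length four. Then |E| ≤ t₁ + t₁·⌊t₂/t₁^{1/2}⌋ + t₂²·(1 + ⌊t₂/t₁^{1/2}⌋)^{-1} ≤ t₁ + 2·t₁^{1/2}·t₂. -/
open Finset

lemma aux_nat (f s : ℕ) : f * (s+1) ≤ (s+1)^2 + (f*f - f) := by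
  rcases le_total f (s+1) with h | h
  · have : f * (s+1) ≤ (s+1) * (s+1) := Nat.mul_le_mul_right _ h
    calc f * (s+1) ≤ (s+1)*(s+1) := this
      _ ≤ (s+1)^2 + (f*f - f) := by rw [pow_two]; omega
  · have h1 : f ≤ f * f := Nat.le_mul_of_pos_left f (by omega)
    zify [h1]
    nlinarith [mul_nonneg (by omega : (0:ℤ) ≤ (f:ℤ) - ((s:ℤ)+1))
      (by omega : (0:ℤ) ≤ (f:ℤ) - 1)]

lemma key {V : Type*} [Fintype V] [DecidableEq V] (G : SimpleGraph V) [DecidableRel G.Adj]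
    (T : Finset V)
    (hcover : ∀ e ∈ G.edgeFinset, ∃ v ∈ T, v ∈ e)
    (hC4 : ¬ ∃ a b c d : V, a ≠ b ∧ a ≠ c ∧ a ≠ d ∧ b ≠ c ∧ b ≠ d ∧ c ≠ d ∧
      G.Adj a b ∧ G.Adj b c ∧ G.Adj c d ∧ G.Adj d a) (s : ℕ) :
    G.edgeFinset.card * (s+1) ≤ Fintype.card V * (s+1)^2 + T.card * T.card := by
  classical
  set f : V → ℕ := fun v => (G.neighborFinset v ∩ T).card with hf
  -- step 1 : |E| ≤ ∑ f v
  have hsub : G.edgeFinset ⊆ T.biUnion (fun u => G.incidenceFinset u) := by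
    intro e he
    obtain ⟨v, hv, hve⟩ := hcover e he
    rw [Finset.mem_biUnion]
    exact ⟨v, hv, by
      rw [SimpleGraph.mem_incidenceFinset]
      exact ⟨(SimpleGraph.mem_edgeFinset.mp he), hve⟩⟩
  have step1 : G.edgeFinset.card ≤ ∑ v : V, f v := by
    have h1 : G.edgeFinset.card ≤ ∑ u ∈ T, G.degree u := by
      calc G.edgeFinset.card ≤ (T.biUnion (fun u => G.incidenceFinset u)).card := card_le_card hsub
        _ ≤ ∑ u ∈ T, (G.incidenceFinset u).card := card_biUnion_le
        _ = ∑ u ∈ T, G.degree u := by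
            refine Finset.sum_congr rfl fun u _ => ?_
            exact G.card_incidenceFinset_eq_degree u
    have h2 : ∑ u ∈ T, G.degree u = ∑ v : V, f v := by
      have : ∀ u, G.degree u = ∑ v : V, if G.Adj u v then 1 else 0 := by
        intro u
        rw [← SimpleGraph.card_neighborFinset_eq_degree, SimpleGraph.neighborFinset_eq_filter,
          Finset.card_filter]
      simp only [this]
      rw [Finset.sum_comm]
      refine Finset.sum_congr rfl fun v _ => ?_
      have hset : G.neighborFinset v ∩ T = T.filter (G.Adj v) := by
        ext u; simp [SimpleGraph.mem_neighborFinset, and_comm]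
      rw [show f v = (G.neighborFinset v ∩ T).card from rfl, hset, Finset.card_filter]
      refine Finset.sum_congr rfl fun u _ => ?_
      simp [G.adj_comm]
    omega
  -- step 2 : ∑ (f v * f v - f v) ≤ t₂² - t₂
  set D : V → Finset (V × V) := fun v => (G.neighborFinset v ∩ T).offDiag with hD
  have hDsub : ∀ v, D v ⊆ T.offDiag := by
    intro v p hp
    rw [Finset.mem_offDiag] at hp ⊢
    simp only [Finset.mem_inter] at hp
    exact ⟨hp.1.2, hp.2.1.2, hp.2.2⟩
  have hdisj : ∀ a ∈ (univ : Finset V), ∀ b ∈ (univ : Finset V), a ≠ b →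
      Disjoint (D a) (D b) := by
    intro a _ b _ hab
    rw [Finset.disjoint_left]
    intro p hpa hpb
    rw [hD] at hpa hpb
    simp only [Finset.mem_offDiag, Finset.mem_inter, SimpleGraph.mem_neighborFinset] at hpa hpb
    obtain ⟨⟨ha1, _⟩, ⟨ha2, _⟩, hne⟩ := hpa
    obtain ⟨⟨hb1, _⟩, ⟨hb2, _⟩, _⟩ := hpb
    exact hC4 ⟨p.1, a, p.2, b, ha1.ne', hne, hb1.ne', ha2.ne, hab, hb2.ne',
      ha1.symm, ha2, hb2.symm, hb1⟩
  have step2 : ∑ v : V, (f v * f v - f v) ≤ T.card * T.card := by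
    have hcards : ∀ v, (D v).card = f v * f v - f v := by
      intro v; rw [hD]; simp [Finset.offDiag_card, hf]
    calc ∑ v : V, (f v * f v - f v) = ∑ v ∈ univ, (D v).card := by
            refine Finset.sum_congr rfl fun v _ => (hcards v).symm
      _ = (univ.biUnion D).card := (Finset.card_biUnion hdisj).symm
      _ ≤ T.offDiag.card := card_le_card (by
            intro p hp
            rw [Finset.mem_biUnion] at hp
            obtain ⟨v, _, hv⟩ := hp
            exact hDsub v hv)
      _ = T.card * T.card - T.card := Finset.offDiag_card T
      _ ≤ T.card * T.card := Nat.sub_le _ _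
  -- step 3 : combine
  calc G.edgeFinset.card * (s+1) ≤ (∑ v : V, f v) * (s+1) :=
        Nat.mul_le_mul_right _ step1
    _ = ∑ v : V, f v * (s+1) := by rw [Finset.sum_mul]
    _ ≤ ∑ v : V, ((s+1)^2 + (f v * f v - f v)) :=
        Finset.sum_le_sum fun v _ => aux_nat (f v) s
    _ = Fintype.card V * (s+1)^2 + ∑ v : V, (f v * f v - f v) := by
        rw [Finset.sum_add_distrib, Finset.sum_const, smul_eq_mul, Finset.card_univ]
    _ ≤ Fintype.card V * (s+1)^2 + T.card * T.card := by omega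

theorem stmt_3 {V : Type*} [Fintype V] [DecidableEq V] (G : SimpleGraph V) [DecidableRel G.Adj]
    (t₁ t₂ : ℕ) (ht₁ : t₁ = Fintype.card V) (T : Finset V) (ht₂ : T.card = t₂)
    (htlt : t₂ < t₁)
    (hcover : ∀ e ∈ G.edgeFinset, ∃ v ∈ T, v ∈ e)
    (hC4 : ¬ ∃ a b c d : V, a ≠ b ∧ a ≠ c ∧ a ≠ d ∧ b ≠ c ∧ b ≠ d ∧ c ≠ d ∧
      G.Adj a b ∧ G.Adj b c ∧ G.Adj c d ∧ G.Adj d a) :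
    (G.edgeFinset.card : ℝ) ≤ (t₁ : ℝ) + (t₁ : ℝ) * ((⌊(t₂ : ℝ) / Real.sqrt (t₁ : ℝ)⌋ : ℤ) : ℝ) +
        (t₂ : ℝ) ^ 2 * ((1 : ℝ) + ((⌊(t₂ : ℝ) / Real.sqrt (t₁ : ℝ)⌋ : ℤ) : ℝ))⁻¹ ∧
      (t₁ : ℝ) + (t₁ : ℝ) * ((⌊(t₂ : ℝ) / Real.sqrt (t₁ : ℝ)⌋ : ℤ) : ℝ) +
        (t₂ : ℝ) ^ 2 * ((1 : ℝ) + ((⌊(t₂ : ℝ) / Real.sqrt (t₁ : ℝ)⌋ : ℤ) : ℝ))⁻¹ ≤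
      (t₁ : ℝ) + 2 * Real.sqrt (t₁ : ℝ) * (t₂ : ℝ) := by
  have ht1pos : 0 < t₁ := by omega
  have ht1posR : (0:ℝ) < (t₁:ℝ) := by exact_mod_cast ht1pos
  have hsq : (0:ℝ) < Real.sqrt (t₁:ℝ) := Real.sqrt_pos.mpr ht1posR
  set c : ℤ := ⌊(t₂ : ℝ) / Real.sqrt (t₁ : ℝ)⌋ with hc
  have hc0 : 0 ≤ c := Int.floor_nonneg.mpr (by positivity)
  set s : ℕ := c.toNat with hs
  have hcs : (c : ℝ) = (s : ℝ) := by
    rw [hs]; exact_mod_cast (Int.toNat_of_nonneg hc0).symm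
  rw [hcs]
  have hkey := key G T hcover hC4 s
  rw [← ht₁, ht₂] at hkey
  have hkeyR : (G.edgeFinset.card : ℝ) * ((s:ℝ)+1) ≤ (t₁:ℝ) * ((s:ℝ)+1)^2 + (t₂:ℝ)^2 := by
    have : ((G.edgeFinset.card * (s+1) : ℕ) : ℝ) ≤ ((t₁ * (s+1)^2 + t₂ * t₂ : ℕ) : ℝ) := by
      exact_mod_cast hkey
    push_cast at this
    nlinarith [this]
  have hspos : (0:ℝ) < (s:ℝ) + 1 := by positivity
  have hspos' : (0:ℝ) < 1 + (s:ℝ) := by positivity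
  constructor
  · rw [← mul_le_mul_iff_of_pos_right hspos]
    calc (G.edgeFinset.card : ℝ) * ((s:ℝ)+1) ≤ (t₁:ℝ) * ((s:ℝ)+1)^2 + (t₂:ℝ)^2 := hkeyR
      _ = ((t₁:ℝ) + (t₁:ℝ)*(s:ℝ) + (t₂:ℝ)^2 * (1+(s:ℝ))⁻¹) * ((s:ℝ)+1) := by
          field_simp
          ring
  · have hfl : (s:ℝ) ≤ (t₂:ℝ) / Real.sqrt (t₁:ℝ) := by
      rw [← hcs]; exact Int.floor_le _
    have hfu : (t₂:ℝ) / Real.sqrt (t₁:ℝ) < (s:ℝ) + 1 := by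
      rw [← hcs]; exact Int.lt_floor_add_one _
    have ht1s : (t₁:ℝ) = Real.sqrt (t₁:ℝ) * Real.sqrt (t₁:ℝ) :=
      (Real.mul_self_sqrt ht1posR.le).symm
    have h1 : (t₁:ℝ) * (s:ℝ) ≤ Real.sqrt (t₁:ℝ) * (t₂:ℝ) := by
      calc (t₁:ℝ) * (s:ℝ) ≤ (t₁:ℝ) * ((t₂:ℝ) / Real.sqrt (t₁:ℝ)) :=
            mul_le_mul_of_nonneg_left hfl ht1posR.le
        _ = (t₂:ℝ) * ((t₁:ℝ) / Real.sqrt (t₁:ℝ)) := by ring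
        _ = Real.sqrt (t₁:ℝ) * (t₂:ℝ) := by rw [Real.div_sqrt]; ring
    have h2 : (t₂:ℝ)^2 * (1+(s:ℝ))⁻¹ ≤ Real.sqrt (t₁:ℝ) * (t₂:ℝ) := by
      rcases Nat.eq_zero_or_pos t₂ with h | h
      · subst h; simp
      · have ht2pos : (0:ℝ) < (t₂:ℝ) := by exact_mod_cast h
        have hdpos : (0:ℝ) < (t₂:ℝ) / Real.sqrt (t₁:ℝ) := by positivity
        have hinv : (1+(s:ℝ))⁻¹ ≤ ((t₂:ℝ) / Real.sqrt (t₁:ℝ))⁻¹ := by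
          apply inv_anti₀ hdpos
          linarith
        calc (t₂:ℝ)^2 * (1+(s:ℝ))⁻¹ ≤ (t₂:ℝ)^2 * ((t₂:ℝ) / Real.sqrt (t₁:ℝ))⁻¹ :=
              mul_le_mul_of_nonneg_left hinv (by positivity)
          _ = Real.sqrt (t₁:ℝ) * (t₂:ℝ) := by field_simp
    linarith
end

section
/- Let S be a finite set of size s ≥ 56. Then there exists a family 𝓗 of 4-element subsets of S satisfying: (i) if H₁, H₂ ∈ 𝓗 and H₁ ≠ H₂, then |H₁ ∩ H₂| ≤ 2; (ii) if K, L, M, N are pairwise disjoint 2-element subsets of S, then at least one of the sets K ∪ L, L ∪ M, M ∪ N, N ∪ K does not lie in 𝓗; (iii) |𝓗| ≥ s³/24576. -/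
open Finset

lemma prod_triple {β R : Type*} [DecidableEq β] [CommMonoid R] (f : β → R) {x y z : β}
    (hxy : x ≠ y) (hxz : x ≠ z) (hyz : y ≠ z) :
    ∏ t ∈ ({x, y, z} : Finset β), f t = f x * (f y * f z) := by
  rw [Finset.prod_insert (by simp [hxy, hxz]), Finset.prod_insert (by simp [hyz]),
    Finset.prod_singleton]

lemma exists_third {β : Type*} [DecidableEq β] {T : Finset β} {x y : β}
    (h : T.card = 3) (hx : x ∈ T) (hy : y ∈ T) (hxy : x ≠ y) :
    ∃ z, x ≠ z ∧ y ≠ z ∧ T = {x, y, z} := by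
  have h1 : ((T.erase x).erase y).card = 1 := by
    rw [Finset.card_erase_of_mem (Finset.mem_erase.mpr ⟨hxy.symm, hy⟩),
      Finset.card_erase_of_mem hx, h]
  obtain ⟨z, hz⟩ := Finset.card_eq_one.mp h1
  have hzm : z ∈ (T.erase x).erase y := hz ▸ Finset.mem_singleton_self z
  have hzy : z ≠ y := (Finset.mem_erase.mp hzm).1
  have hzx : z ≠ x := (Finset.mem_erase.mp (Finset.mem_erase.mp hzm).2).1
  have hzT : z ∈ T := Finset.mem_of_mem_erase (Finset.mem_of_mem_erase hzm)
  refine ⟨z, hzx.symm, hzy.symm, ?_⟩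
  have hsub : ({x, y, z} : Finset β) ⊆ T := by
    intro t ht
    simp only [Finset.mem_insert, Finset.mem_singleton] at ht
    rcases ht with rfl | rfl | rfl <;> assumption
  have hcard : ({x, y, z} : Finset β).card = 3 := by
    rw [Finset.card_insert_of_notMem (by simp [hxy, hzx.symm]),
      Finset.card_insert_of_notMem (by simp [hzy.symm]), Finset.card_singleton]
  exact (Finset.eq_of_subset_of_card_le hsub (by omega)).symm

-- factors of the product are nonzero


lemma roots_le_two {p : ℕ} [Fact p.Prime] {T : Finset (ZMod p)} (hT : T.card = 3) :
    (Finset.univ.filter (fun b : ZMod p => b ≠ 0 ∧ ∏ x ∈ T, (1 + b * x) = 1)).card ≤ 2 := by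
  by_contra hgt
  push_neg at hgt
  obtain ⟨a, b, c, ha, hb, hc, hab, hac, hbc⟩ := Finset.two_lt_card_iff.mp hgt
  simp only [Finset.mem_filter, Finset.mem_univ, true_and] at ha hb hc
  obtain ⟨x, y, z, hxy, hxz, hyz, rfl⟩ := Finset.card_eq_three.mp hT
  have key : ∀ t : ZMod p, t ≠ 0 → (∏ u ∈ ({x,y,z} : Finset (ZMod p)), (1 + t * u) = 1) →
      (x + y + z) + t * (x*y + y*z + z*x) + t^2 * (x*y*z) = 0 := by
    intro t ht h
    rw [prod_triple _ hxy hxz hyz] at h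
    have h' : t * ((x + y + z) + t * (x*y + y*z + z*x) + t^2 * (x*y*z)) = 0 := by
      linear_combination h
    exact (mul_eq_zero.mp h').resolve_left ht
  have Ea := key a ha.1 ha.2
  have Eb := key b hb.1 hb.2
  have Ec := key c hc.1 hc.2
  have h1 : (x*y + y*z + z*x) + (a + b) * (x*y*z) = 0 := by
    apply mul_left_cancel₀ (sub_ne_zero.mpr hab)
    linear_combination Ea - Eb
  have h2 : (x*y + y*z + z*x) + (a + c) * (x*y*z) = 0 := by
    apply mul_left_cancel₀ (sub_ne_zero.mpr hac)
    linear_combination Ea - Ec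
  have he3 : x*y*z = 0 := by
    apply mul_left_cancel₀ (sub_ne_zero.mpr hbc)
    linear_combination h1 - h2
  have he2 : x*y + y*z + z*x = 0 := by linear_combination h1 - (a+b) * he3
  have he1 : x + y + z = 0 := by linear_combination Ea - a * he2 - a^2 * he3
  rcases mul_eq_zero.mp he3 with h | h
  · rcases mul_eq_zero.mp h with rfl | rfl
    · -- x = 0
      have : y * z = 0 := by linear_combination he2
      rcases mul_eq_zero.mp this with rfl | rfl
      · exact hxy rfl
      · exact hxz rfl
    · -- y = 0
      have : x * z = 0 := by linear_combination he2 - he3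
      rcases mul_eq_zero.mp this with rfl | rfl
      · exact hxy rfl
      · exact hyz rfl
  · -- z = 0
    subst h
    have : x * y = 0 := by simpa using he2
    rcases mul_eq_zero.mp this with rfl | rfl
    · exact hxz rfl
    · exact hyz rfl


lemma third_unique {p : ℕ} [Fact p.Prime] {a : ZMod p} (ha : a ≠ 0)
    {T1 T2 : Finset (ZMod p)} (h1 : T1.card = 3) (h2 : T2.card = 3)
    (hc1 : ∏ x ∈ T1, (1 + a * x) = 1) (hc2 : ∏ x ∈ T2, (1 + a * x) = 1)
    {x y : ZMod p} (hxy : x ≠ y) (hx1 : x ∈ T1) (hy1 : y ∈ T1) (hx2 : x ∈ T2) (hy2 : y ∈ T2) :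
    T1 = T2 := by
  obtain ⟨z1, hxz1, hyz1, rfl⟩ := exists_third h1 hx1 hy1 hxy
  obtain ⟨z2, hxz2, hyz2, rfl⟩ := exists_third h2 hx2 hy2 hxy
  rw [prod_triple _ hxy hxz1 hyz1] at hc1
  rw [prod_triple _ hxy hxz2 hyz2] at hc2
  have hfx : (1:ZMod p) + a * x ≠ 0 := by
    intro h0; rw [h0, zero_mul] at hc1; exact one_ne_zero hc1.symm
  have hfy : (1:ZMod p) + a * y ≠ 0 := by
    intro h0; rw [h0, zero_mul, mul_zero] at hc1; exact one_ne_zero hc1.symm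
  have h3 := mul_left_cancel₀ hfy (mul_left_cancel₀ hfx (hc1.trans hc2.symm))
  have : z1 = z2 := by
    have := add_left_cancel h3
    exact mul_left_cancel₀ ha this
  rw [this]


lemma count_triples {p : ℕ} [Fact p.Prime] {a : ZMod p} (ha : a ≠ 0) :
    p * p ≤ 9 * ((Finset.powersetCard 3 (Finset.univ : Finset (ZMod p))).filter
      (fun T => ∏ x ∈ T, (1 + a * x) = 1)).card + 5 * p := by
  classical
  set R := (Finset.powersetCard 3 (Finset.univ : Finset (ZMod p))).filter
      (fun T => ∏ x ∈ T, (1 + a * x) = 1) with hR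
  set Pall : Finset (ZMod p × ZMod p) := Finset.univ ×ˢ Finset.univ with hPall
  set good := Pall.filter (fun q : ZMod p × ZMod p =>
    q.1 ≠ 0 ∧ q.2 ≠ 0 ∧ q.1 ≠ q.2 ∧ q.1 * q.1 * q.2 ≠ 1 ∧ q.1 * q.2 * q.2 ≠ 1) with hgood
  set bad := Pall.filter (fun q : ZMod p × ZMod p =>
    ¬(q.1 ≠ 0 ∧ q.2 ≠ 0 ∧ q.1 ≠ q.2 ∧ q.1 * q.1 * q.2 ≠ 1 ∧ q.1 * q.2 * q.2 ≠ 1)) with hbad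
  have hsplit : good.card + bad.card = p * p := by
    rw [hgood, hbad, Finset.card_filter_add_card_filter_not]
    simp [hPall, Finset.card_univ, ZMod.card p]
  -- bad is small
  have hbadcard : bad.card ≤ 5 * p := by
    have hsub : bad ⊆ (Pall.filter (fun q => q.1 = 0)) ∪ (Pall.filter (fun q => q.2 = 0))
        ∪ (Pall.filter (fun q => q.1 = q.2)) ∪ (Pall.filter (fun q => q.1 * q.1 * q.2 = 1))
        ∪ (Pall.filter (fun q => q.1 * q.2 * q.2 = 1)) := by
      intro q hq
      rw [hbad, Finset.mem_filter] at hq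
      obtain ⟨hqP, hq⟩ := hq
      push_neg at hq
      simp only [Finset.mem_union, Finset.mem_filter]
      by_cases h1 : q.1 = 0
      · tauto
      by_cases h2 : q.2 = 0
      · tauto
      by_cases h3 : q.1 = q.2
      · tauto
      by_cases h4 : q.1 * q.1 * q.2 = 1
      · tauto
      · exact Or.inr ⟨hqP, hq h1 h2 h3 h4⟩
    have hp1 : (Pall.filter (fun q : ZMod p × ZMod p => q.1 = 0)).card ≤ p := by
      have := Finset.card_le_card_of_injOn (Prod.snd)
        (fun q _ => Finset.mem_univ q.2)
        (s := Pall.filter (fun q : ZMod p × ZMod p => q.1 = 0)) ?_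
      · simpa [Finset.card_univ, ZMod.card p] using this
      · intro q hq q' hq' h
        simp only [Finset.coe_filter, Set.mem_setOf_eq] at hq hq'
        exact Prod.ext (hq.2.trans hq'.2.symm) h
    have hp2 : (Pall.filter (fun q : ZMod p × ZMod p => q.2 = 0)).card ≤ p := by
      have := Finset.card_le_card_of_injOn (Prod.fst)
        (fun q _ => Finset.mem_univ q.1)
        (s := Pall.filter (fun q : ZMod p × ZMod p => q.2 = 0)) ?_
      · simpa [Finset.card_univ, ZMod.card p] using this
      · intro q hq q' hq' h
        simp only [Finset.coe_filter, Set.mem_setOf_eq] at hq hq'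
        exact Prod.ext h (hq.2.trans hq'.2.symm)
    have hp3 : (Pall.filter (fun q : ZMod p × ZMod p => q.1 = q.2)).card ≤ p := by
      have := Finset.card_le_card_of_injOn (Prod.fst)
        (fun q _ => Finset.mem_univ q.1)
        (s := Pall.filter (fun q : ZMod p × ZMod p => q.1 = q.2)) ?_
      · simpa [Finset.card_univ, ZMod.card p] using this
      · intro q hq q' hq' h
        simp only [Finset.coe_filter, Set.mem_setOf_eq] at hq hq'
        exact Prod.ext h (hq.2.symm.trans (h ▸ hq'.2))
    have hp4 : (Pall.filter (fun q : ZMod p × ZMod p => q.1 * q.1 * q.2 = 1)).card ≤ p := by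
      have := Finset.card_le_card_of_injOn (Prod.fst)
        (fun q _ => Finset.mem_univ q.1)
        (s := Pall.filter (fun q : ZMod p × ZMod p => q.1 * q.1 * q.2 = 1)) ?_
      · simpa [Finset.card_univ, ZMod.card p] using this
      · intro q hq q' hq' h
        simp only [Finset.coe_filter, Set.mem_setOf_eq] at hq hq'
        refine Prod.ext h ?_
        have hne : q.1 * q.1 ≠ 0 := by
          intro h0; rw [h0, zero_mul] at hq; exact one_ne_zero hq.2.symm
        apply mul_left_cancel₀ hne
        rw [hq.2, h, hq'.2]
    have hp5 : (Pall.filter (fun q : ZMod p × ZMod p => q.1 * q.2 * q.2 = 1)).card ≤ p := by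
      have := Finset.card_le_card_of_injOn (Prod.snd)
        (fun q _ => Finset.mem_univ q.2)
        (s := Pall.filter (fun q : ZMod p × ZMod p => q.1 * q.2 * q.2 = 1)) ?_
      · simpa [Finset.card_univ, ZMod.card p] using this
      · intro q hq q' hq' h
        simp only [Finset.coe_filter, Set.mem_setOf_eq] at hq hq'
        refine Prod.ext ?_ h
        have hne : q.2 * q.2 ≠ 0 := by
          intro h0
          have : q.1 * q.2 * q.2 = 0 := by rw [mul_assoc, h0, mul_zero]
          rw [hq.2] at this; exact one_ne_zero this
        apply mul_right_cancel₀ hne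
        have e1 : q.1 * (q.2 * q.2) = 1 := by rw [← mul_assoc, hq.2]
        have e2 : q'.1 * (q.2 * q.2) = 1 := by rw [h, ← mul_assoc, hq'.2]
        rw [e1, e2]
    calc bad.card ≤ _ := Finset.card_le_card hsub
      _ ≤ 5 * p := by
        refine le_trans (Finset.card_union_le _ _) ?_
        refine le_trans (Nat.add_le_add_right (Finset.card_union_le _ _) _) ?_
        refine le_trans (Nat.add_le_add_right (Nat.add_le_add_right (Finset.card_union_le _ _) _) _) ?_
        refine le_trans (Nat.add_le_add_right (Nat.add_le_add_right (Nat.add_le_add_right (Finset.card_union_le _ _) _) _) _) ?_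
        omega
  -- good maps into R with fibers ≤ 9
  have hgoodR : good.card ≤ 9 * R.card := by
    set ψ : ZMod p → ZMod p := fun t => (t - 1) * a⁻¹ with hψ
    have hψinv : ∀ t, 1 + a * ψ t = t := by
      intro t; rw [hψ]; field_simp; ring
    set F : ZMod p × ZMod p → Finset (ZMod p) :=
      fun q => ({ψ q.1, ψ q.2, ψ (q.1 * q.2)⁻¹} : Finset (ZMod p)) with hF
    have hψinj : Function.Injective ψ := by
      intro u v h
      have := congrArg (fun t => 1 + a * t) h
      simpa [hψinv] using this
    have himg : good.image F ⊆ R := by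
      intro U hU
      obtain ⟨q, hq, rfl⟩ := Finset.mem_image.mp hU
      rw [hgood, Finset.mem_filter] at hq
      obtain ⟨-, h1, h2, h3, h4, h5⟩ := hq
      have hw : (q.1 * q.2)⁻¹ ≠ q.1 := by
        intro h
        apply h4
        have : q.1 * (q.1 * q.2) = (q.1*q.2)⁻¹ * (q.1 * q.2) := by rw [h]
        rw [inv_mul_cancel₀ (mul_ne_zero h1 h2)] at this
        linear_combination this
      have hw2 : (q.1 * q.2)⁻¹ ≠ q.2 := by
        intro h
        apply h5
        have : q.2 * (q.1 * q.2) = (q.1*q.2)⁻¹ * (q.1 * q.2) := by rw [h]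
        rw [inv_mul_cancel₀ (mul_ne_zero h1 h2)] at this
        linear_combination this
      have hd1 : ψ q.1 ≠ ψ q.2 := fun h => h3 (hψinj h)
      have hd2 : ψ q.1 ≠ ψ (q.1 * q.2)⁻¹ := fun h => hw (hψinj h).symm
      have hd3 : ψ q.2 ≠ ψ (q.1 * q.2)⁻¹ := fun h => hw2 (hψinj h).symm
      rw [hR, Finset.mem_filter, Finset.mem_powersetCard]
      refine ⟨⟨Finset.subset_univ _, ?_⟩, ?_⟩
      · rw [hF]
        rw [Finset.card_insert_of_notMem (by
            simp only [Finset.mem_insert, Finset.mem_singleton]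
            exact not_or.mpr ⟨hd1, hd2⟩),
          Finset.card_insert_of_notMem (by
            simp only [Finset.mem_singleton]; exact hd3), Finset.card_singleton]
      · rw [hF, prod_triple _ hd1 hd2 hd3, hψinv, hψinv, hψinv,
          ← mul_assoc, mul_inv_cancel₀ (mul_ne_zero h1 h2)]
    have hfib : ∀ U ∈ good.image F, (good.filter (fun q => F q = U)).card ≤ 9 := by
      intro U hU
      have hUcard : U.card ≤ 3 := by
        obtain ⟨q, hq, rfl⟩ := Finset.mem_image.mp hU
        refine le_trans (Finset.card_insert_le _ _) ?_
        refine Nat.succ_le_succ (le_trans (Finset.card_insert_le _ _) ?_)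
        simp
      set g : ZMod p → ZMod p := fun t => 1 + a * t with hg
      have hsub2 : good.filter (fun q => F q = U) ⊆ (U.image g) ×ˢ (U.image g) := by
        intro q hq
        rw [Finset.mem_filter] at hq
        obtain ⟨-, hFq⟩ := hq
        rw [Finset.mem_product]
        constructor
        · refine Finset.mem_image.mpr ⟨ψ q.1, ?_, hψinv q.1⟩
          rw [← hFq, hF]; simp
        · refine Finset.mem_image.mpr ⟨ψ q.2, ?_, hψinv q.2⟩
          rw [← hFq, hF]; simp
      refine le_trans (Finset.card_le_card hsub2) ?_
      rw [Finset.card_product]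
      have : (U.image g).card ≤ 3 := le_trans (Finset.card_image_le) hUcard
      nlinarith
    have := Finset.card_le_mul_card_image good 9 hfib
    exact le_trans this (Nat.mul_le_mul_left 9 (Finset.card_le_card himg))
  omega


lemma aux_cycle {α : Type*} [DecidableEq α] {p : ℕ} [Fact p.Prime] {ι β : ZMod p → α}
    (hι : Function.Injective ι) (hβ : Function.Injective β) (hd : ∀ a x, β a ≠ ι x)
    {a1 a2 a3 a4 : ZMod p} {T1 T2 T3 T4 : Finset (ZMod p)}
    (ha1 : a1 ≠ 0) (ha2 : a2 ≠ 0)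
    (hc1 : ∏ x ∈ T1, (1 + a1 * x) = 1) (hc2 : ∏ x ∈ T2, (1 + a2 * x) = 1)
    (hc3 : ∏ x ∈ T3, (1 + a3 * x) = 1) (hc4 : ∏ x ∈ T4, (1 + a4 * x) = 1)
    (ht1 : T1.card = 3) (ht2 : T2.card = 3) (ht3 : T3.card = 3) (ht4 : T4.card = 3)
    {K L M N : Finset α} (hK : K.card = 2) (hL : L.card = 2) (hM : M.card = 2) (hN : N.card = 2)
    (dKL : Disjoint K L) (dKM : Disjoint K M) (dKN : Disjoint K N)
    (dLM : Disjoint L M) (dLN : Disjoint L N) (dMN : Disjoint M N)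
    (e1 : K ∪ L = insert (β a1) (T1.image ι))
    (e2 : L ∪ M = insert (β a2) (T2.image ι))
    (e3 : M ∪ N = insert (β a3) (T3.image ι))
    (e4 : N ∪ K = insert (β a4) (T4.image ι))
    (hin : β a1 ∈ K) : False := by
  classical
  -- a4 = a1
  have hba1 : β a1 ∈ insert (β a4) (T4.image ι) := by
    rw [← e4]; exact Finset.mem_union_right _ hin
  have ha41 : a4 = a1 := by
    rcases Finset.mem_insert.mp hba1 with h | h
    · exact hβ h.symm
    · obtain ⟨t, -, ht⟩ := Finset.mem_image.mp h
      exact absurd ht.symm (hd a1 t)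
  rw [ha41] at hc4 e4
  -- β a2 ∈ M
  have hba2 : β a2 ∈ L ∪ M := by rw [e2]; exact Finset.mem_insert_self _ _
  have hin2 : β a2 ∈ M := by
    rcases Finset.mem_union.mp hba2 with h | h
    · exfalso
      have : β a2 ∈ K ∪ L := Finset.mem_union_right _ h
      rw [e1] at this
      rcases Finset.mem_insert.mp this with h' | h'
      · exact Finset.disjoint_left.mp dKL (hβ h' ▸ hin) h
      · obtain ⟨t, -, ht⟩ := Finset.mem_image.mp h'
        exact hd a2 t ht.symm
    · exact h
  -- a3 = a2
  have hba3 : β a2 ∈ insert (β a3) (T3.image ι) := by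
    rw [← e3]; exact Finset.mem_union_left _ hin2
  have ha32 : a3 = a2 := by
    rcases Finset.mem_insert.mp hba3 with h | h
    · exact (hβ h).symm
    · obtain ⟨t, -, ht⟩ := Finset.mem_image.mp h
      exact absurd ht.symm (hd a2 t)
  rw [ha32] at hc3 e3
  -- a1 ≠ a2
  have ha12 : a1 ≠ a2 := by
    intro h
    exact Finset.disjoint_left.mp dKM hin (h ▸ hin2)
  -- structure of K : K = {β a1, ι b}
  obtain ⟨u, v, huv, hKuv⟩ := Finset.card_eq_two.mp hK
  have hothK : ∃ b, b ∈ T1 ∧ b ∈ T4 ∧ ι b ∈ K := by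
    have hmem : ∀ w ∈ K, w ≠ β a1 → ∃ b, b ∈ T1 ∧ b ∈ T4 ∧ ι b = w := by
      intro w hw hwne
      have hw1 : w ∈ K ∪ L := Finset.mem_union_left _ hw
      rw [e1] at hw1
      rcases Finset.mem_insert.mp hw1 with h | h
      · exact absurd h hwne
      obtain ⟨b, hb, hbw⟩ := Finset.mem_image.mp h
      have hw4 : w ∈ N ∪ K := Finset.mem_union_right _ hw
      rw [e4] at hw4
      rcases Finset.mem_insert.mp hw4 with h' | h'
      · exact absurd h' hwne
      obtain ⟨b', hb', hbw'⟩ := Finset.mem_image.mp h'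
      have : b' = b := hι (hbw'.trans hbw.symm)
      exact ⟨b, hb, this ▸ hb', hbw⟩
    rcases Finset.mem_insert.mp (by rw [hKuv] at hin; exact hin) with h | h
    · -- β a1 = u
      obtain ⟨b, hb1, hb4, hbv⟩ := hmem v (by rw [hKuv]; simp)
        (fun hc => huv (h.symm.trans hc.symm))
      exact ⟨b, hb1, hb4, hbv ▸ (by rw [hKuv]; simp)⟩
    · -- β a1 = v
      rw [Finset.mem_singleton] at h
      obtain ⟨b, hb1, hb4, hbu⟩ := hmem u (by rw [hKuv]; simp)
        (fun hc => huv (hc.trans h))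
      exact ⟨b, hb1, hb4, hbu ▸ (by rw [hKuv]; simp)⟩
  obtain ⟨b, hbT1, hbT4, hbK⟩ := hothK
  -- structure of M : ι b' ∈ M with b' ∈ T2 ∩ T3
  obtain ⟨u', v', huv', hMuv⟩ := Finset.card_eq_two.mp hM
  have hothM : ∃ b', b' ∈ T2 ∧ b' ∈ T3 ∧ ι b' ∈ M := by
    have hmem : ∀ w ∈ M, w ≠ β a2 → ∃ b', b' ∈ T2 ∧ b' ∈ T3 ∧ ι b' = w := by
      intro w hw hwne
      have hw1 : w ∈ L ∪ M := Finset.mem_union_right _ hw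
      rw [e2] at hw1
      rcases Finset.mem_insert.mp hw1 with h | h
      · exact absurd h hwne
      obtain ⟨b', hb, hbw⟩ := Finset.mem_image.mp h
      have hw3 : w ∈ M ∪ N := Finset.mem_union_left _ hw
      rw [e3] at hw3
      rcases Finset.mem_insert.mp hw3 with h' | h'
      · exact absurd h' hwne
      obtain ⟨b'', hb', hbw'⟩ := Finset.mem_image.mp h'
      have : b'' = b' := hι (hbw'.trans hbw.symm)
      exact ⟨b', hb, this ▸ hb', hbw⟩
    rcases Finset.mem_insert.mp (by rw [hMuv] at hin2; exact hin2) with h | h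
    · obtain ⟨b', hb2, hb3, hbv⟩ := hmem v' (by rw [hMuv]; simp)
        (fun hc => huv' (h.symm.trans hc.symm))
      exact ⟨b', hb2, hb3, hbv ▸ (by rw [hMuv]; simp)⟩
    · rw [Finset.mem_singleton] at h
      obtain ⟨b', hb2, hb3, hbu⟩ := hmem u' (by rw [hMuv]; simp)
        (fun hc => huv' (hc.trans h))
      exact ⟨b', hb2, hb3, hbu ▸ (by rw [hMuv]; simp)⟩
  obtain ⟨b', hbT2, hbT3, hbM⟩ := hothM
  -- structure of L : L = {ι x, ι y}
  have hLsub : ∀ w ∈ L, ∃ t, t ∈ T1 ∧ t ∈ T2 ∧ ι t = w := by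
    intro w hw
    have hw1 : w ∈ K ∪ L := Finset.mem_union_right _ hw
    rw [e1] at hw1
    rcases Finset.mem_insert.mp hw1 with h | h
    · rw [h] at hw; exact absurd hw (Finset.disjoint_left.mp dKL hin)
    obtain ⟨t, ht1m, htw⟩ := Finset.mem_image.mp h
    have hw2 : w ∈ L ∪ M := Finset.mem_union_left _ hw
    rw [e2] at hw2
    rcases Finset.mem_insert.mp hw2 with h' | h'
    · rw [h'] at hw; exact absurd hin2 (Finset.disjoint_left.mp dLM hw)
    obtain ⟨t', ht2m, htw'⟩ := Finset.mem_image.mp h'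
    exact ⟨t, ht1m, (hι (htw'.trans htw.symm)) ▸ ht2m, htw⟩
  have hNsub : ∀ w ∈ N, ∃ t, t ∈ T3 ∧ t ∈ T4 ∧ ι t = w := by
    intro w hw
    have hw1 : w ∈ M ∪ N := Finset.mem_union_right _ hw
    rw [e3] at hw1
    rcases Finset.mem_insert.mp hw1 with h | h
    · rw [h] at hw; exact absurd hw (Finset.disjoint_left.mp dMN hin2)
    obtain ⟨t, ht3m, htw⟩ := Finset.mem_image.mp h
    have hw2 : w ∈ N ∪ K := Finset.mem_union_left _ hw
    rw [e4] at hw2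
    rcases Finset.mem_insert.mp hw2 with h' | h'
    · rw [h'] at hw; exact absurd hw (Finset.disjoint_left.mp dKN hin)
    obtain ⟨t', ht4m, htw'⟩ := Finset.mem_image.mp h'
    exact ⟨t, ht3m, (hι (htw'.trans htw.symm)) ▸ ht4m, htw⟩
  obtain ⟨lu, lv, hluv, hLuv⟩ := Finset.card_eq_two.mp hL
  obtain ⟨x, hxT1, hxT2, hx⟩ := hLsub lu (by rw [hLuv]; simp)
  obtain ⟨y, hyT1, hyT2, hy⟩ := hLsub lv (by rw [hLuv]; simp)
  have hxy : x ≠ y := fun h => hluv (by rw [← hx, ← hy, h])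
  obtain ⟨nu, nv, hnuv, hNuv⟩ := Finset.card_eq_two.mp hN
  obtain ⟨z, hzT3, hzT4, hz⟩ := hNsub nu (by rw [hNuv]; simp)
  obtain ⟨w, hwT3, hwT4, hw⟩ := hNsub nv (by rw [hNuv]; simp)
  have hzw : z ≠ w := fun h => hnuv (by rw [← hz, ← hw, h])
  -- explicit memberships
  have hxL : ι x ∈ L := by rw [hLuv, hx]; simp
  have hyL : ι y ∈ L := by rw [hLuv, hy]; simp
  have hzN : ι z ∈ N := by rw [hNuv, hz]; simp
  have hwN : ι w ∈ N := by rw [hNuv, hw]; simp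
  -- distinctness
  have hbx : b ≠ x := fun h => Finset.disjoint_left.mp dKL hbK (h ▸ hxL)
  have hby : b ≠ y := fun h => Finset.disjoint_left.mp dKL hbK (h ▸ hyL)
  have hbz : b' ≠ z := fun h => Finset.disjoint_left.mp dMN hbM (h ▸ hzN)
  have hbw : b' ≠ w := fun h => Finset.disjoint_left.mp dMN hbM (h ▸ hwN)
  have hzx : z ≠ x := fun h => Finset.disjoint_left.mp dLN hxL (h ▸ hzN)
  have hzy : z ≠ y := fun h => Finset.disjoint_left.mp dLN hyL (h ▸ hzN)
  have hbz2 : b ≠ z := fun h => Finset.disjoint_left.mp dKN hbK (h ▸ hzN)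
  have hbw2 : b ≠ w := fun h => Finset.disjoint_left.mp dKN hbK (h ▸ hwN)
  have hbx2 : b' ≠ x := fun h => Finset.disjoint_left.mp dLM hxL (h ▸ hbM)
  have hby2 : b' ≠ y := fun h => Finset.disjoint_left.mp dLM hyL (h ▸ hbM)
  -- identify the triples
  have triple_eq : ∀ (T : Finset (ZMod p)) (c d e : ZMod p), T.card = 3 →
      c ∈ T → d ∈ T → e ∈ T → c ≠ d → c ≠ e → d ≠ e → T = {c, d, e} := by
    intro T c d e hT hc hd he hcd hce hde
    refine (Finset.eq_of_subset_of_card_le ?_ (by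
      rw [hT, Finset.card_insert_of_notMem (by
          simp only [Finset.mem_insert, Finset.mem_singleton]; exact not_or.mpr ⟨hcd, hce⟩),
        Finset.card_insert_of_notMem (by simp only [Finset.mem_singleton]; exact hde),
        Finset.card_singleton])).symm
    intro t ht
    simp only [Finset.mem_insert, Finset.mem_singleton] at ht
    rcases ht with rfl | rfl | rfl <;> assumption
  have hT1 : T1 = {b, x, y} := triple_eq T1 b x y ht1 hbT1 hxT1 hyT1 hbx hby hxy
  have hT2 : T2 = {b', x, y} := triple_eq T2 b' x y ht2 hbT2 hxT2 hyT2 hbx2 hby2 hxy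
  have hT3 : T3 = {b', z, w} := triple_eq T3 b' z w ht3 hbT3 hzT3 hwT3 hbz hbw hzw
  have hT4 : T4 = {b, z, w} := triple_eq T4 b z w ht4 hbT4 hzT4 hwT4 hbz2 hbw2 hzw
  -- products
  rw [hT1, prod_triple _ hbx hby hxy] at hc1
  rw [hT2, prod_triple _ hbx2 hby2 hxy] at hc2
  rw [hT3, prod_triple _ hbz hbw hzw] at hc3
  rw [hT4, prod_triple _ hbz2 hbw2 hzw] at hc4
  -- cancel heads
  have hb1ne : (1 : ZMod p) + a1 * b ≠ 0 := by
    intro h0; rw [h0, zero_mul] at hc1; exact one_ne_zero hc1.symm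
  have hb2ne : (1 : ZMod p) + a2 * b' ≠ 0 := by
    intro h0; rw [h0, zero_mul] at hc2; exact one_ne_zero hc2.symm
  have hA : (1 + a1 * x) * (1 + a1 * y) = (1 + a1 * z) * (1 + a1 * w) :=
    mul_left_cancel₀ hb1ne (hc1.trans hc4.symm)
  have hB : (1 + a2 * x) * (1 + a2 * y) = (1 + a2 * z) * (1 + a2 * w) :=
    mul_left_cancel₀ hb2ne (hc2.trans hc3.symm)
  -- algebra
  have key : a1 * a2 * (a2 - a1) * ((z - x) * (z - y)) = 0 := by
    linear_combination (-(a2*(a2*z+1))) * hA + (a1*(1+a1*z)) * hB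
  have h0 : (z - x) * (z - y) = 0 := by
    have hne : a1 * a2 * (a2 - a1) ≠ 0 :=
      mul_ne_zero (mul_ne_zero ha1 ha2) (sub_ne_zero.mpr (Ne.symm ha12))
    exact (mul_eq_zero.mp key).resolve_left hne
  rcases mul_eq_zero.mp h0 with h | h
  · exact hzx (sub_eq_zero.mp h)
  · exact hzy (sub_eq_zero.mp h)


theorem stmt_4 {α : Type*} [DecidableEq α] (S : Finset α) (s : ℕ) (hs : S.card = s)
    (h56 : 56 ≤ s) :
    ∃ 𝓗 : Finset (Finset α),
      (∀ H ∈ 𝓗, H ⊆ S ∧ H.card = 4) ∧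
      (∀ H₁ ∈ 𝓗, ∀ H₂ ∈ 𝓗, H₁ ≠ H₂ → (H₁ ∩ H₂).card ≤ 2) ∧
      (∀ K L M N : Finset α, K ⊆ S → L ⊆ S → M ⊆ S → N ⊆ S →
        K.card = 2 → L.card = 2 → M.card = 2 → N.card = 2 →
        Disjoint K L → Disjoint K M → Disjoint K N →
        Disjoint L M → Disjoint L N → Disjoint M N →
        ¬(K ∪ L ∈ 𝓗 ∧ L ∪ M ∈ 𝓗 ∧ M ∪ N ∈ 𝓗 ∧ N ∪ K ∈ 𝓗)) ∧
      (s : ℝ) ^ 3 / 24576 ≤ (𝓗.card : ℝ) := by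
  classical
  obtain ⟨p, pp, hp1, hp2⟩ := Nat.bertrand (s / 4) (by omega)
  haveI := Fact.mk pp
  haveI : NeZero p := ⟨pp.ne_zero⟩
  have hp15 : 15 ≤ p := by omega
  have h2p : 2 * p ≤ s := by omega
  have hps : s + 1 ≤ 4 * p := by omega
  have hcard_pos : 0 < S.card := by omega
  set e : ℕ → α := fun n => ((S.equivFin.symm ⟨n % S.card, Nat.mod_lt _ hcard_pos⟩ : S) : α)
    with he
  have he_mem : ∀ n, e n ∈ S := fun n => Finset.coe_mem _
  have he_inj : ∀ m n, m < s → n < s → e m = e n → m = n := by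
    intro m n hm hn h
    rw [he] at h
    have h2 := S.equivFin.symm.injective (Subtype.coe_injective h)
    have h3 : m % S.card = n % S.card := congrArg Fin.val h2
    rw [hs] at h3
    rwa [Nat.mod_eq_of_lt hm, Nat.mod_eq_of_lt hn] at h3
  set ι : ZMod p → α := fun x => e x.val with hiota
  set β : ZMod p → α := fun a => e (p + a.val) with hbeta
  have hvlt : ∀ x : ZMod p, x.val < p := fun x => ZMod.val_lt x
  have hι : Function.Injective ι := by
    intro x y h
    exact ZMod.val_injective p (he_inj _ _ (by have := hvlt x; omega) (by have := hvlt y; omega) h)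
  have hβ : Function.Injective β := by
    intro x y h
    have := he_inj _ _ (by have := hvlt x; omega) (by have := hvlt y; omega) h
    exact ZMod.val_injective p (by omega)
  have hd : ∀ a x : ZMod p, β a ≠ ι x := by
    intro a x h
    have := he_inj _ _ (by have := hvlt a; omega) (by have := hvlt x; omega) h
    have := hvlt x
    omega
  have hιS : ∀ x, ι x ∈ S := fun x => he_mem _
  have hβS : ∀ a, β a ∈ S := fun a => he_mem _
  -- the family
  set Raw : Finset (ZMod p × Finset (ZMod p)) :=
    (Finset.univ ×ˢ Finset.powersetCard 3 Finset.univ).filter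
      (fun q => q.1 ≠ 0 ∧ ∏ x ∈ q.2, (1 + q.1 * x) = 1) with hRaw
  set Good : Finset (ZMod p × Finset (ZMod p)) :=
    Raw.filter (fun q => ∀ b : ZMod p, b ≠ 0 → (∏ x ∈ q.2, (1 + b * x) = 1) →
      q.1.val ≤ b.val) with hGood
  have hRawProps : ∀ q ∈ Raw, q.1 ≠ 0 ∧ q.2.card = 3 ∧ (∏ x ∈ q.2, (1 + q.1 * x) = 1) := by
    intro q hq
    rw [hRaw, Finset.mem_filter, Finset.mem_product, Finset.mem_powersetCard] at hq
    exact ⟨hq.2.1, hq.1.2.2, hq.2.2⟩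
  have hGoodRaw : Good ⊆ Raw := Finset.filter_subset _ _
  set F : ZMod p × Finset (ZMod p) → Finset α :=
    fun q => insert (β q.1) (q.2.image ι) with hF
  set H𝓗 : Finset (Finset α) := Good.image F with hH
  have hmemH : ∀ H ∈ H𝓗, ∃ q ∈ Good, F q = H := fun H h => Finset.mem_image.mp h
  -- basic shape facts
  have hshape : ∀ q ∈ Raw, (F q) ⊆ S ∧ (F q).card = 4 := by
    intro q hq
    obtain ⟨hq1, hq2, hq3⟩ := hRawProps q hq
    constructor
    · simp only [hF]
      refine Finset.insert_subset (hβS _) ?_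
      intro t ht
      obtain ⟨x, -, rfl⟩ := Finset.mem_image.mp ht
      exact hιS x
    · simp only [hF]
      have hnot : β q.1 ∉ q.2.image ι := by
        intro h
        obtain ⟨x, -, hx⟩ := Finset.mem_image.mp h
        exact hd q.1 x hx.symm
      rw [Finset.card_insert_of_notMem hnot, Finset.card_image_of_injective _ hι, hq2]
  refine ⟨H𝓗, ?_, ?_, ?_, ?_⟩
  · -- (o) subsets of S of size 4
    intro H hH'
    obtain ⟨q, hq, rfl⟩ := hmemH H hH'
    exact hshape q (hGoodRaw hq)
  · -- (i) pairwise intersections ≤ 2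
    intro H1 h1 H2 h2 hne
    obtain ⟨q, hq, rfl⟩ := hmemH H1 h1
    obtain ⟨q', hq', rfl⟩ := hmemH H2 h2
    obtain ⟨hq1, hq2, hq3⟩ := hRawProps q (hGoodRaw hq)
    obtain ⟨hq1', hq2', hq3'⟩ := hRawProps q' (hGoodRaw hq')
    have hmin := (Finset.mem_filter.mp hq).2
    have hmin' := (Finset.mem_filter.mp hq').2
    have hnotmem : ∀ (a : ZMod p) (T : Finset (ZMod p)), β a ∉ T.image ι := by
      intro a T h
      obtain ⟨x, -, hx⟩ := Finset.mem_image.mp h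
      exact hd a x hx.symm
    by_cases haa : q.1 = q'.1
    · -- same apex
      have hTT : q.2 ≠ q'.2 := by
        intro h
        exact hne (congrArg F (Prod.ext haa h))
      have hint : F q ∩ F q' = insert (β q'.1) ((q.2 ∩ q'.2).image ι) := by
        simp only [hF]
        rw [haa, Finset.insert_inter_of_mem (Finset.mem_insert_self _ _),
          Finset.inter_insert_of_notMem (hnotmem _ _), ← Finset.image_inter _ _ hι]
      rw [hint]
      refine le_trans (Finset.card_insert_le _ _) ?_
      have hcap : (q.2 ∩ q'.2).card ≤ 1 := by
        by_contra hc
        push_neg at hc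
        obtain ⟨x, hx, y, hy, hxy⟩ := Finset.one_lt_card.mp hc
        rw [Finset.mem_inter] at hx hy
        have := third_unique hq1 hq2 hq2' hq3 (by rw [haa]; exact hq3') hxy
          hx.1 hy.1 hx.2 hy.2
        exact hTT this
      rw [Finset.card_image_of_injective _ hι]
      omega
    · -- different apexes
      have hTT : q.2 ≠ q'.2 := by
        intro h
        apply haa
        have h1le := hmin q'.1 hq1' (by rw [h]; exact hq3')
        have h2le := hmin' q.1 hq1 (by rw [← h]; exact hq3)
        exact ZMod.val_injective p (le_antisymm h1le h2le)
      have hsub : F q ∩ F q' ⊆ (q.2 ∩ q'.2).image ι := by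
        intro t ht
        rw [Finset.mem_inter] at ht
        obtain ⟨ht1, ht2⟩ := ht
        simp only [hF] at ht1 ht2
        rcases Finset.mem_insert.mp ht1 with rfl | hm1
        · rcases Finset.mem_insert.mp ht2 with hh | hh
          · exact absurd (hβ hh) haa
          · exact absurd hh (hnotmem _ _)
        rcases Finset.mem_insert.mp ht2 with hh | hm2
        · exact absurd (hh ▸ hm1) (hnotmem _ _)
        obtain ⟨x, hx, rfl⟩ := Finset.mem_image.mp hm1
        obtain ⟨y, hy, hyx⟩ := Finset.mem_image.mp hm2
        exact Finset.mem_image.mpr ⟨x, Finset.mem_inter.mpr ⟨hx, (hι hyx) ▸ hy⟩, rfl⟩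
      refine le_trans (Finset.card_le_card hsub) ?_
      rw [Finset.card_image_of_injective _ hι]
      by_contra hc
      push_neg at hc
      have h3 : q.2 ∩ q'.2 = q.2 := by
        apply Finset.eq_of_subset_of_card_le (Finset.inter_subset_left)
        omega
      apply hTT
      apply Finset.eq_of_subset_of_card_le
      · rw [← h3]; exact Finset.inter_subset_right
      · omega
  · -- (ii) no loose cycles
    intro K L M N hKS hLS hMS hNS hK hL hM hN dKL dKM dKN dLM dLN dMN hcon
    obtain ⟨hm1, hm2, hm3, hm4⟩ := hcon
    obtain ⟨q1, hq1g, he1⟩ := hmemH _ hm1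
    obtain ⟨q2, hq2g, he2⟩ := hmemH _ hm2
    obtain ⟨q3, hq3g, he3⟩ := hmemH _ hm3
    obtain ⟨q4, hq4g, he4⟩ := hmemH _ hm4
    obtain ⟨ha1, ht1, hc1⟩ := hRawProps q1 (hGoodRaw hq1g)
    obtain ⟨ha2, ht2, hc2⟩ := hRawProps q2 (hGoodRaw hq2g)
    obtain ⟨ha3, ht3, hc3⟩ := hRawProps q3 (hGoodRaw hq3g)
    obtain ⟨ha4, ht4, hc4⟩ := hRawProps q4 (hGoodRaw hq4g)
    simp only [hF] at he1 he2 he3 he4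
    -- the apex of H1 is in K or L
    have hap : β q1.1 ∈ K ∪ L := by rw [← he1]; exact Finset.mem_insert_self _ _
    rcases Finset.mem_union.mp hap with hinK | hinL
    · exact aux_cycle hι hβ hd ha1 ha2 hc1 hc2 hc3 hc4 ht1 ht2 ht3 ht4
        hK hL hM hN dKL dKM dKN dLM dLN dMN
        he1.symm he2.symm he3.symm he4.symm hinK
    · -- reflected cycle : (L, K, N, M)
      exact aux_cycle hι hβ hd ha1 ha4 hc1 hc4 hc3 hc2 ht1 ht4 ht3 ht2
        hL hK hN hM dKL.symm dLN dLM dKN dKM dMN.symm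
        (by rw [Finset.union_comm]; exact he1.symm)
        (by rw [Finset.union_comm]; exact he4.symm)
        (by rw [Finset.union_comm]; exact he3.symm)
        (by rw [Finset.union_comm]; exact he2.symm)
        hinL
  · -- (iii) counting
    have hnotmem : ∀ (a : ZMod p) (T : Finset (ZMod p)), β a ∉ T.image ι := by
      intro a T h
      obtain ⟨x, -, hx⟩ := Finset.mem_image.mp h
      exact hd a x hx.symm
    -- |H𝓗| = |Good|
    have hcard1 : H𝓗.card = Good.card := by
      rw [hH]
      apply Finset.card_image_of_injOn
      intro q hq q' hq' hfe
      simp only [hF] at hfe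
      have hq1 : β q.1 ∈ insert (β q'.1) (q'.2.image ι) := by
        rw [← hfe]; exact Finset.mem_insert_self _ _
      have haa : q.1 = q'.1 := by
        rcases Finset.mem_insert.mp hq1 with h | h
        · exact hβ h
        · exact absurd h (hnotmem _ _)
      have hTT : q.2 = q'.2 := by
        apply Finset.image_injective hι
        rw [haa] at hfe
        have h3 := congrArg (fun (t : Finset α) => t.erase (β q'.1)) hfe
        simpa [Finset.erase_insert (hnotmem q'.1 q.2),
          Finset.erase_insert (hnotmem q'.1 q'.2)] using h3
      exact Prod.ext haa hTT
    -- |Good| = number of covered triples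
    have hsndG : Good.image Prod.snd = Raw.image Prod.snd := by
      apply Finset.Subset.antisymm (Finset.image_subset_image hGoodRaw)
      intro T hT
      obtain ⟨q, hq, rfl⟩ := Finset.mem_image.mp hT
      obtain ⟨hq1, hq2, hq3⟩ := hRawProps q hq
      have hne : (Finset.univ.filter (fun b : ZMod p => b ≠ 0 ∧
          ∏ x ∈ q.2, (1 + b * x) = 1)).Nonempty :=
        ⟨q.1, Finset.mem_filter.mpr ⟨Finset.mem_univ _, hq1, hq3⟩⟩
      obtain ⟨b0, hb0, hb0min⟩ := Finset.exists_min_image _ ZMod.val hne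
      rw [Finset.mem_filter] at hb0
      refine Finset.mem_image.mpr ⟨(b0, q.2), ?_, rfl⟩
      rw [hGood, Finset.mem_filter]
      constructor
      · rw [hRaw, Finset.mem_filter, Finset.mem_product]
        refine ⟨⟨Finset.mem_univ _, ?_⟩, hb0.2.1, hb0.2.2⟩
        rw [Finset.mem_powersetCard]
        exact ⟨Finset.subset_univ _, hq2⟩
      · intro b hb hbc
        exact hb0min b (Finset.mem_filter.mpr ⟨Finset.mem_univ _, hb, hbc⟩)
    have hsndInj : Set.InjOn Prod.snd (Good : Set (ZMod p × Finset (ZMod p))) := by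
      intro q hq q' hq' h
      simp only [Finset.mem_coe] at hq hq'
      have hmin := (Finset.mem_filter.mp hq).2
      have hmin' := (Finset.mem_filter.mp hq').2
      obtain ⟨hr1, hr2, hr3⟩ := hRawProps q (hGoodRaw hq)
      obtain ⟨hr1', hr2', hr3'⟩ := hRawProps q' (hGoodRaw hq')
      have h1le := hmin q'.1 hr1' (by rw [h]; exact hr3')
      have h2le := hmin' q.1 hr1 (by rw [← h]; exact hr3)
      exact Prod.ext (ZMod.val_injective p (le_antisymm h1le h2le)) h
    have hcard2 : Good.card = (Raw.image Prod.snd).card := by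
      rw [← hsndG]
      exact (Finset.card_image_of_injOn hsndInj).symm
    -- |Raw| ≤ 2 |Good|
    have hcard3 : Raw.card ≤ 2 * Good.card := by
      rw [hcard2]
      apply Finset.card_le_mul_card_image
      intro T hT
      obtain ⟨q0, hq0, rfl⟩ := Finset.mem_image.mp hT
      obtain ⟨-, hq02, -⟩ := hRawProps q0 hq0
      have hsub : Raw.filter (fun q => q.2 = q0.2) ⊆
          (Finset.univ.filter (fun b : ZMod p => b ≠ 0 ∧
            ∏ x ∈ q0.2, (1 + b * x) = 1)).image (fun b => (b, q0.2)) := by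
        intro q hq
        rw [Finset.mem_filter] at hq
        obtain ⟨hqr, hq2⟩ := hq
        obtain ⟨h1, -, h3⟩ := hRawProps q hqr
        refine Finset.mem_image.mpr ⟨q.1, Finset.mem_filter.mpr
          ⟨Finset.mem_univ _, h1, by rw [← hq2]; exact h3⟩, ?_⟩
        rw [← hq2]
      refine le_trans (Finset.card_le_card hsub) (le_trans Finset.card_image_le ?_)
      exact roots_le_two hq02
    -- fiberwise decomposition of Raw
    have hfib : ∀ a : ZMod p, a ≠ 0 → (Raw.filter (fun q => q.1 = a)).card =
        ((Finset.powersetCard 3 (Finset.univ : Finset (ZMod p))).filter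
          (fun T => ∏ x ∈ T, (1 + a * x) = 1)).card := by
      intro a ha
      apply Finset.card_bij (fun q _ => q.2)
      · intro q hq
        rw [Finset.mem_filter] at hq ⊢
        obtain ⟨hqr, hq1⟩ := hq
        rw [hRaw, Finset.mem_filter, Finset.mem_product] at hqr
        exact ⟨hqr.1.2, by rw [← hq1]; exact hqr.2.2⟩
      · intro q hq q' hq' h
        rw [Finset.mem_filter] at hq hq'
        exact Prod.ext (hq.2.trans hq'.2.symm) h
      · intro T hT
        rw [Finset.mem_filter] at hT
        refine ⟨(a, T), Finset.mem_filter.mpr ⟨?_, rfl⟩, rfl⟩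
        rw [hRaw, Finset.mem_filter, Finset.mem_product]
        exact ⟨⟨Finset.mem_univ _, hT.1⟩, ha, hT.2⟩
    have hsum : Raw.card = ∑ a ∈ (Finset.univ : Finset (ZMod p)),
        (Raw.filter (fun q => q.1 = a)).card :=
      Finset.card_eq_sum_card_fiberwise (fun q _ => Finset.mem_univ q.1)
    have hsum2 : ∑ a ∈ Finset.univ.erase (0 : ZMod p),
        (Raw.filter (fun q => q.1 = a)).card ≤ Raw.card := by
      rw [hsum]
      exact Finset.sum_le_sum_of_subset (Finset.erase_subset _ _)
    have herasecard : (Finset.univ.erase (0 : ZMod p)).card = p - 1 := by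
      rw [Finset.card_erase_of_mem (Finset.mem_univ _), Finset.card_univ, ZMod.card]
    have hmain : (p - 1) * (p * p) ≤ 9 * Raw.card + (p - 1) * (5 * p) := by
      have hstep : ∀ a ∈ Finset.univ.erase (0 : ZMod p),
          p * p ≤ 9 * (Raw.filter (fun q => q.1 = a)).card + 5 * p := by
        intro a ha
        rw [hfib a (Finset.mem_erase.mp ha).1]
        exact count_triples (Finset.mem_erase.mp ha).1
      calc (p - 1) * (p * p)
          = ∑ _a ∈ Finset.univ.erase (0 : ZMod p), p * p := by
            rw [Finset.sum_const, herasecard, smul_eq_mul]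
        _ ≤ ∑ a ∈ Finset.univ.erase (0 : ZMod p),
            (9 * (Raw.filter (fun q => q.1 = a)).card + 5 * p) :=
            Finset.sum_le_sum hstep
        _ = 9 * (∑ a ∈ Finset.univ.erase (0 : ZMod p),
            (Raw.filter (fun q => q.1 = a)).card) + (p - 1) * (5 * p) := by
            rw [Finset.sum_add_distrib, Finset.mul_sum, Finset.sum_const, herasecard,
              smul_eq_mul]
        _ ≤ 9 * Raw.card + (p - 1) * (5 * p) := by
            have := Nat.mul_le_mul_left 9 hsum2
            omega
    -- assemble : 18 * card ≥ (p-1)p(p-5)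
    have hfin : (p - 1) * (p * p) ≤ 18 * H𝓗.card + (p - 1) * (5 * p) := by
      rw [hcard1]
      omega
    -- cast to ℝ
    have h1p : (1 : ℕ) ≤ p := by omega
    have hcast : ((p : ℝ) - 1) * ((p : ℝ) * p) ≤
        18 * (H𝓗.card : ℝ) + ((p : ℝ) - 1) * (5 * p) := by
      have := hfin
      have hc : (((p - 1) * (p * p) : ℕ) : ℝ) ≤ ((18 * H𝓗.card + (p - 1) * (5 * p) : ℕ) : ℝ) := by
        exact_mod_cast this
      push_cast [Nat.cast_sub h1p] at hc
      convert hc using 2 <;> ring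
    have hp4r : (s : ℝ) + 1 ≤ 4 * (p : ℝ) := by exact_mod_cast hps
    have hp15r : (15 : ℝ) ≤ (p : ℝ) := by exact_mod_cast hp15
    have hsge : (56 : ℝ) ≤ (s : ℝ) := by exact_mod_cast h56
    rw [div_le_iff₀ (by norm_num : (0:ℝ) < 24576)]
    have hs3 : (s : ℝ) ^ 3 ≤ 64 * (p : ℝ) ^ 3 := by
      have h1 : (s : ℝ) ≤ 4 * p := by linarith
      have h2 : (0:ℝ) ≤ (s : ℝ) := by positivity
      calc (s : ℝ) ^ 3 ≤ (4 * (p:ℝ)) ^ 3 := by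
            exact pow_le_pow_left₀ h2 h1 3
        _ = 64 * (p : ℝ) ^ 3 := by ring
    have hkey : 1152 * (p : ℝ) ^ 3 ≤
        24576 * (((p : ℝ) - 1) * ((p : ℝ) * p) - ((p : ℝ) - 1) * (5 * p)) := by
      nlinarith [mul_nonneg (sq_nonneg ((p:ℝ))) (sub_nonneg.mpr hp15r), sq_nonneg ((p:ℝ)),
        mul_nonneg (sub_nonneg.mpr hp15r) (sq_nonneg ((p:ℝ)))]
    nlinarith [hcast, hs3, hkey]
end

section
/- Let A be a multiplicative Sidon set of positive integers and let l ≥ 0 be an integer. Then there exists N (depending on l) such that for all n ≥ N, |A_l^{*}(n)| ≤ 10·n^{3/4}/(log n)^{l/2}. -/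
open Finset in
lemma c4_quad (T : Finset (ℕ × ℕ)) (U V : Finset ℕ)
    (hU : ∀ p ∈ T, p.1 ∈ U) (hV : ∀ p ∈ T, p.2 ∈ V)
    (hC4 : ∀ u u' v v', (u,v) ∈ T → (u,v') ∈ T → (u',v) ∈ T → (u',v') ∈ T → u = u' ∨ v = v') :
    (T.card : ℝ) ≤ U.card + Real.sqrt U.card * V.card := by
  classical
  set d : ℕ → ℕ := fun u => (T.filter fun p => p.1 = u).card with hd
  have hsum : T.card = ∑ u ∈ U, d u := card_eq_sum_card_fiberwise hU
  set P : Finset ((ℕ×ℕ)×(ℕ×ℕ)) := (T ×ˢ T).filter (fun q => q.1.1 = q.2.1 ∧ q.1.2 ≠ q.2.2)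
    with hP
  have hfiber : ∀ u, P.filter (fun q => q.1.1 = u) = (T.filter fun p => p.1 = u).offDiag := by
    intro u
    ext q
    simp only [hP, mem_filter, mem_product, mem_offDiag]
    constructor
    · rintro ⟨⟨⟨h1, h2⟩, h3, h4⟩, h5⟩
      refine ⟨⟨h1, h5⟩, ⟨h2, h3 ▸ h5⟩, fun hq => h4 (by rw [hq])⟩
    · rintro ⟨⟨h1, h5⟩, ⟨h2, h6⟩, h7⟩
      refine ⟨⟨⟨h1, h2⟩, by rw [h5, h6], fun hq => h7 ?_⟩, h5⟩
      exact Prod.ext (by rw [h5, h6]) hq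
  have hPcard : P.card = ∑ u ∈ U, (d u * d u - d u) := by
    rw [card_eq_sum_card_fiberwise (f := fun q => q.1.1) (t := U)
      (fun q hq => by
        exact hU _ (mem_product.1 (mem_filter.1 hq).1).1)]
    exact Finset.sum_congr rfl fun u _ => by rw [hfiber u, Finset.offDiag_card]
  have hPle : P.card ≤ V.card * V.card - V.card := by
    rw [← Finset.offDiag_card]
    apply Finset.card_le_card_of_injOn (fun q => (q.1.2, q.2.2))
    · intro q hq
      have hq := mem_filter.1 hq
      exact Finset.mem_offDiag.2 ⟨hV q.1 (mem_product.1 hq.1).1, hV q.2 (mem_product.1 hq.1).2, hq.2.2⟩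
    · intro q hq q' hq' heq
      simp only [hP, mem_coe, mem_filter, mem_product] at hq hq'
      simp only [Prod.mk.injEq] at heq
      obtain ⟨h12, h22⟩ := heq
      have m1 : (q.1.1, q.1.2) ∈ T := by rw [Prod.mk.eta]; exact hq.1.1
      have m2 : (q.1.1, q.2.2) ∈ T := by rw [hq.2.1, Prod.mk.eta]; exact hq.1.2
      have m3 : (q'.1.1, q.1.2) ∈ T := by rw [h12, Prod.mk.eta]; exact hq'.1.1
      have m4 : (q'.1.1, q.2.2) ∈ T := by rw [h22, hq'.2.1, Prod.mk.eta]; exact hq'.1.2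
      rcases hC4 _ _ _ _ m1 m2 m3 m4 with h | h
      · have e1 : q.1 = q'.1 := Prod.ext h h12
        have e2 : q.2 = q'.2 := by
          refine Prod.ext ?_ h22
          rw [← hq.2.1, ← hq'.2.1]; exact h
        exact Prod.ext e1 e2
      · exact absurd h hq.2.2
  have hsq : ∑ u ∈ U, d u * d u ≤ V.card * V.card + ∑ u ∈ U, d u := by
    have key : ∑ u ∈ U, (d u * d u - d u) + ∑ u ∈ U, d u = ∑ u ∈ U, d u * d u := by
      rw [← Finset.sum_add_distrib]
      refine Finset.sum_congr rfl fun u _ => ?_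
      rcases Nat.eq_zero_or_pos (d u) with h | h
      · simp [h]
      · exact Nat.sub_add_cancel (Nat.le_mul_of_pos_left _ h)
    rw [← key, ← hPcard]
    exact add_le_add_left (hPle.trans (Nat.sub_le _ _)) _
  have hCS : (T.card : ℝ)^2 ≤ (U.card : ℝ) * ((V.card:ℝ)^2 + T.card) := by
    have h2 : (∑ u ∈ U, (d u : ℝ))^2 ≤ (U.card : ℝ) * ∑ u ∈ U, (d u : ℝ)^2 :=
      sq_sum_le_card_mul_sum_sq
    have hcast := (Nat.cast_le (α := ℝ)).2 hsq
    push_cast at hcast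
    have h3 : ∑ u ∈ U, (d u : ℝ)^2 ≤ (V.card:ℝ)^2 + (T.card:ℝ) := by
      calc ∑ u ∈ U, (d u:ℝ)^2 = ∑ u ∈ U, (d u:ℝ)*(d u) := by simp [sq]
        _ ≤ (V.card:ℝ)*(V.card) + ∑ u ∈ U, (d u:ℝ) := hcast
        _ = (V.card:ℝ)^2 + (T.card:ℝ) := by rw [hsum]; push_cast; ring
    calc (T.card:ℝ)^2 = (∑ u ∈ U, (d u : ℝ))^2 := by rw [hsum]; push_cast; ring
      _ ≤ (U.card : ℝ) * ∑ u ∈ U, (d u : ℝ)^2 := h2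
      _ ≤ (U.card : ℝ) * ((V.card:ℝ)^2 + T.card) :=
          mul_le_mul_of_nonneg_left h3 (by positivity)
  have hu : (0:ℝ) ≤ (U.card:ℝ) := by positivity
  have hv : (0:ℝ) ≤ (V.card:ℝ) := by positivity
  have he : (0:ℝ) ≤ (T.card:ℝ) := by positivity
  have hs : Real.sqrt (U.card:ℝ) ^ 2 = (U.card:ℝ) := Real.sq_sqrt hu
  have hs0 : 0 ≤ Real.sqrt (U.card:ℝ) := Real.sqrt_nonneg _
  by_contra hcon
  push_neg at hcon
  nlinarith [mul_nonneg hs0 hv, sq_nonneg ((T.card:ℝ) - Real.sqrt (U.card:ℝ) * (V.card:ℝ)),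
    sq_nonneg (Real.sqrt (U.card:ℝ) * (V.card:ℝ))]

lemma sqrt_two_pow (j : ℕ) : Real.sqrt ((2:ℝ)^j) = (Real.sqrt 2)^j := by
  induction j with
  | zero => simp
  | succ k ih => rw [pow_succ, pow_succ, Real.sqrt_mul (by positivity), ih]

/-- `A` is a multiplicative Sidon set: for every `s`, the equation `x * y = s` has at most
one solution (up to ordering) with `x, y ∈ A`. -/
def MulSidon (A : Set ℕ) : Prop :=
  ∀ x ∈ A, ∀ y ∈ A, ∀ z ∈ A, ∀ w ∈ A, x * y = z * w → (x = z ∧ y = w) ∨ (x = w ∧ y = z)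

set_option maxHeartbeats 2000000 in
theorem stmt_7 (A : Set ℕ) (hpos : ∀ a ∈ A, 0 < a) (hS : MulSidon A) (l : ℕ) :
    ∃ N : ℕ, ∀ n : ℕ, N ≤ n →
      (Nat.card {a : ℕ | a ∈ A ∩ Set.Icc 1 n ∧ ∃ u v : ℕ, 0 < u ∧ 0 < v ∧ a = u * v ∧ v ≤ u ∧
          (n : ℝ) ^ ((1 : ℝ) / 3) ≤ (v : ℝ) ∧
          (v : ℝ) ≤ (n : ℝ) ^ ((1 : ℝ) / 2) / (Real.log n) ^ l} : ℝ)
        ≤ 10 * (n : ℝ) ^ ((3 : ℝ) / 4) / (Real.log n) ^ ((l : ℝ) / 2) := by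
  classical
  rw [← Filter.eventually_atTop]
  have hlog : ∀ᶠ n : ℕ in Filter.atTop,
      (Real.log n) ^ ((l : ℝ) / 2) ≤ (1/2) * (n : ℝ) ^ ((1:ℝ)/12) := by
    have hoo := isLittleO_log_rpow_rpow_atTop ((l:ℝ)/2) (show (0:ℝ) < 1/12 by norm_num)
    have hb := hoo.def (show (0:ℝ) < 1/2 by norm_num)
    have hc := (tendsto_natCast_atTop_atTop (R := ℝ)).eventually hb
    filter_upwards [hc, Filter.eventually_ge_atTop 1] with n hn hn1
    simp only [Function.comp, Real.norm_eq_abs] at hn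
    calc (Real.log n) ^ ((l : ℝ) / 2) ≤ |(Real.log n) ^ ((l : ℝ) / 2)| := le_abs_self _
      _ ≤ 1/2 * |(n:ℝ) ^ ((1:ℝ)/12)| := hn
      _ = 1/2 * (n:ℝ) ^ ((1:ℝ)/12) := by
          rw [abs_of_nonneg (Real.rpow_nonneg (by positivity) _)]
  filter_upwards [hlog, Filter.eventually_ge_atTop 3] with n hlog2 hn3
  rw [Nat.card_coe_set_eq]
  set x := (n:ℝ) with hxdef
  have hx3 : (3:ℝ) ≤ x := by rw [hxdef]; exact_mod_cast hn3
  have hx0 : (0:ℝ) < x := by linarith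
  have hlogn : (1:ℝ) ≤ Real.log x := by
    rw [Real.le_log_iff_exp_le hx0]
    calc Real.exp 1 ≤ 2.7182818286 := Real.exp_one_lt_d9.le
      _ ≤ x := by linarith
  set L := (Real.log x)^l with hLdef
  have hL1 : (1:ℝ) ≤ L := one_le_pow₀ hlogn
  have hL0 : (0:ℝ) < L := by linarith
  set W := x ^ ((1:ℝ)/2) / L with hWdef
  set D := (Real.log x) ^ ((l:ℝ)/2) with hDdef
  have hD0 : (0:ℝ) < D := Real.rpow_pos_of_pos (by linarith) _
  have hsqrtL : Real.sqrt L = D := by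
    rw [hLdef, hDdef, Real.sqrt_eq_rpow, ← Real.rpow_natCast (Real.log x) l,
      ← Real.rpow_mul (by linarith), mul_one_div]
  by_cases hW1 : (1:ℝ) ≤ W
  swap
  · -- degenerate: the set is empty
    have hempty : {a : ℕ | a ∈ A ∩ Set.Icc 1 n ∧ ∃ u v : ℕ, 0 < u ∧ 0 < v ∧ a = u * v ∧ v ≤ u ∧
        x ^ ((1 : ℝ) / 3) ≤ (v : ℝ) ∧ (v : ℝ) ≤ W} = ∅ := by
      ext a
      simp only [Set.mem_setOf_eq, Set.mem_empty_iff_false, iff_false, not_and]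
      rintro - ⟨u, v, hu, hv, -, -, -, hvW⟩
      have h1v : (1:ℝ) ≤ (v:ℝ) := by exact_mod_cast hv
      push_neg at hW1
      linarith
    rw [hempty, Set.ncard_empty]
    have : (0:ℝ) ≤ 10 * x ^ ((3:ℝ)/4) / D := div_nonneg (by positivity) hD0.le
    simpa using this
  -- main case
  set T : Finset (ℕ×ℕ) := (Finset.Icc 1 n ×ˢ Finset.Icc 1 n).filter
    (fun p => p.1 * p.2 ∈ A ∧ p.1 * p.2 ≤ n ∧ p.2 ≤ p.1 ∧
      x ^ ((1:ℝ)/3) ≤ (p.2:ℝ) ∧ (p.2:ℝ) ≤ W) with hTdef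
  have hT2 : ∀ p ∈ T, (1 ≤ p.1 ∧ p.2 ≤ n) ∧ 1 ≤ p.2 ∧ p.1 * p.2 ≤ n ∧
      x ^ ((1:ℝ)/3) ≤ (p.2:ℝ) ∧ (p.2:ℝ) ≤ W ∧ p.1 * p.2 ∈ A := by
    intro p hp
    simp only [hTdef, Finset.mem_filter, Finset.mem_product, Finset.mem_Icc] at hp
    exact ⟨⟨hp.1.1.1, hp.1.2.2⟩, hp.1.2.1, hp.2.2.1, hp.2.2.2.2.1, hp.2.2.2.2.2, hp.2.1⟩
  have hC4T : ∀ u u' v v', (u,v) ∈ T → (u,v') ∈ T → (u',v) ∈ T → (u',v') ∈ T →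
      u = u' ∨ v = v' := by
    intro u u' v v' h1 h2 h3 h4
    have k1 := hT2 _ h1
    have k2 := hT2 _ h2
    have k3 := hT2 _ h3
    have k4 := hT2 _ h4
    have hu : 0 < u := k1.1.1
    have hv : 0 < v := k1.2.1
    have key : (u*v) * (u'*v') = (u*v') * (u'*v) := by ring
    rcases hS _ k1.2.2.2.2.2 _ k4.2.2.2.2.2 _ k2.2.2.2.2.2 _ k3.2.2.2.2.2 key with
      ⟨e1, -⟩ | ⟨e1, -⟩
    · right; exact Nat.eq_of_mul_eq_mul_left hu e1
    · left; exact Nat.eq_of_mul_eq_mul_right hv e1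
  -- bound stated for an abstract set whose elements decompose
  have main : ∀ S : Set ℕ,
      (∀ a ∈ S, ∃ u v : ℕ, 0 < u ∧ 0 < v ∧ a = u*v ∧ v ≤ u ∧ u*v ∈ A ∧ u*v ≤ n ∧
          x ^ ((1:ℝ)/3) ≤ (v:ℝ) ∧ (v:ℝ) ≤ W) →
      (S.ncard : ℝ) ≤ 10 * x ^ ((3:ℝ)/4) / D := by
    intro S hs
    -- inject S into T
    have hrep : ∀ a : ℕ, ∃ p : ℕ × ℕ, a ∈ S → a = p.1 * p.2 ∧ p ∈ T := by
      intro a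
      by_cases ha : a ∈ S
      · obtain ⟨u, v, hu, hv, hauv, hvu, hAuv, hn', hlo, hhi⟩ := hs a ha
        refine ⟨(u, v), fun _ => ⟨hauv, ?_⟩⟩
        rw [hTdef]
        refine Finset.mem_filter.2 ⟨Finset.mem_product.2 ⟨?_, ?_⟩, hAuv, hn', hvu, hlo, hhi⟩
        · exact Finset.mem_Icc.2 ⟨hu, le_trans (Nat.le_mul_of_pos_right u hv) hn'⟩
        · exact Finset.mem_Icc.2 ⟨hv, le_trans (Nat.le_mul_of_pos_left v hu) hn'⟩
      · exact ⟨(0,0), fun h => absurd h ha⟩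
    choose F hF using hrep
    have hinj : Set.InjOn F S := fun a ha b hb hab => by
      rw [(hF a ha).1, (hF b hb).1, hab]
    have himg : F '' S ⊆ (T : Set (ℕ×ℕ)) := by
      rintro p ⟨a, ha, rfl⟩; exact (hF a ha).2
    have hST : S.ncard ≤ T.card := by
      calc S.ncard = (F '' S).ncard := (Set.ncard_image_of_injOn hinj).symm
        _ ≤ (↑T : Set (ℕ×ℕ)).ncard := Set.ncard_le_ncard himg T.finite_toSet
        _ = T.card := Set.ncard_coe_finset T
    -- fiberwise decomposition by dyadic blocks of the second coordinate
    set c : ℕ → ℕ := fun j => (T.filter fun p => Nat.log 2 p.2 = j).card with hcdef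
    have hTsum : T.card = ∑ j ∈ Finset.range (n+1), c j := by
      refine Finset.card_eq_sum_card_fiberwise fun p hp => Finset.mem_range.2 ?_
      have := (hT2 p hp).1.2
      have := Nat.log_le_self 2 p.2
      omega
    -- per-block bound
    have hfb : ∀ j, (c j : ℝ) ≤ x * (1/2)^j + Real.sqrt x * (Real.sqrt 2)^j := by
      intro j
      set Tj := T.filter (fun p => Nat.log 2 p.2 = j) with hTjdef
      have hUj : ∀ p ∈ Tj, p.1 ∈ Finset.Icc 1 (n / 2^j) := by
        intro p hp
        obtain ⟨hpT, hpj⟩ := Finset.mem_filter.1 hp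
        obtain ⟨⟨h1, -⟩, h2, hnle, -⟩ := hT2 p hpT
        refine Finset.mem_Icc.2 ⟨h1, ?_⟩
        rw [Nat.le_div_iff_mul_le (pow_pos (by norm_num) j)]
        calc p.1 * 2^j ≤ p.1 * p.2 :=
              Nat.mul_le_mul_left _ (hpj ▸ Nat.pow_log_le_self 2 (by omega))
          _ ≤ n := hnle
      have hVj : ∀ p ∈ Tj, p.2 ∈ Finset.Ico (2^j) (2^(j+1)) := by
        intro p hp
        obtain ⟨hpT, hpj⟩ := Finset.mem_filter.1 hp
        have h2 : p.2 ≠ 0 := by have := (hT2 p hpT).2.1; omega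
        exact Finset.mem_Ico.2 ⟨hpj ▸ Nat.pow_log_le_self 2 h2,
          hpj ▸ Nat.lt_pow_succ_log_self (by norm_num) _⟩
      have hC4j : ∀ u u' v v', (u,v) ∈ Tj → (u,v') ∈ Tj → (u',v) ∈ Tj → (u',v') ∈ Tj →
          u = u' ∨ v = v' := fun u u' v v' h1 h2 h3 h4 =>
        hC4T u u' v v' (Finset.mem_filter.1 h1).1 (Finset.mem_filter.1 h2).1
          (Finset.mem_filter.1 h3).1 (Finset.mem_filter.1 h4).1
      have hb := c4_quad Tj _ _ hUj hVj hC4j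
      have hUcard : (Finset.Icc 1 (n / 2^j)).card = n / 2^j := by
        rw [Nat.card_Icc]
        exact Nat.add_sub_cancel _ _
      have hVcard : (Finset.Ico (2^j) (2^(j+1))).card = 2^j := by
        rw [Nat.card_Ico, pow_succ]; omega
      rw [hUcard, hVcard] at hb
      have hcast : ((n / 2^j : ℕ) : ℝ) ≤ x / 2^j := by
        calc ((n / 2^j : ℕ) : ℝ) ≤ (n:ℝ) / ((2^j : ℕ):ℝ) := Nat.cast_div_le
          _ = x / 2^j := by rw [hxdef]; push_cast; ring
      have hxj : (0:ℝ) ≤ x / 2^j := by positivity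
      have hsqeq : Real.sqrt (x / 2^j) * (2:ℝ)^j = Real.sqrt x * (Real.sqrt 2)^j := by
        rw [Real.sqrt_div hx0.le, sqrt_two_pow]
        have hne : (Real.sqrt 2)^j ≠ 0 := by positivity
        have h2j : ((Real.sqrt 2:ℝ))^j * (Real.sqrt 2)^j = 2^j := by
          rw [← mul_pow, Real.mul_self_sqrt (by norm_num)]
        field_simp
        nlinarith [h2j, Real.sqrt_nonneg x, Real.sqrt_nonneg 2]
      calc (c j : ℝ) = (Tj.card : ℝ) := by rw [hcdef]
        _ ≤ ((n / 2^j : ℕ) : ℝ) + Real.sqrt ((n / 2^j : ℕ)) * ((2^j : ℕ):ℝ) := hb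
        _ ≤ x / 2^j + Real.sqrt (x / 2^j) * (2:ℝ)^j := by
            have hs1 : Real.sqrt ((n / 2^j : ℕ)) ≤ Real.sqrt (x / 2^j) :=
              Real.sqrt_le_sqrt hcast
            have hs2 : ((2^j : ℕ):ℝ) = (2:ℝ)^j := by push_cast; ring
            rw [hs2]
            exact add_le_add hcast (mul_le_mul_of_nonneg_right hs1 (by positivity))
        _ = x * (1/2)^j + Real.sqrt x * (Real.sqrt 2)^j := by
            rw [hsqeq, one_div, inv_pow, div_eq_mul_inv]
      -- end per-block
    -- good blocks
    set good : ℕ → Prop := fun j => x ^ ((1:ℝ)/3) < (2:ℝ)^(j+1) ∧ ((2:ℝ)^j ≤ W) with hgdef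
    set G := (Finset.range (n+1)).filter good with hGdef
    have hsum2 : ∑ j ∈ Finset.range (n+1), c j = ∑ j ∈ G, c j := by
      refine (Finset.sum_subset (Finset.filter_subset _ _) ?_).symm
      intro j hj hjG
      by_contra hc0
      obtain ⟨p, hp⟩ := Finset.card_pos.1 (Nat.pos_of_ne_zero hc0)
      obtain ⟨hpT, hpj⟩ := Finset.mem_filter.1 hp
      obtain ⟨-, h2, -, hlo, hhi, -⟩ := hT2 p hpT
      apply hjG
      refine Finset.mem_filter.2 ⟨hj, ?_, ?_⟩
      · calc x ^ ((1:ℝ)/3) ≤ (p.2:ℝ) := hlo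
          _ < (2:ℝ)^(j+1) := by
              have := hpj ▸ Nat.lt_pow_succ_log_self (show 1 < 2 by norm_num) p.2
              exact_mod_cast this
      · calc ((2:ℝ)^j) ≤ (p.2:ℝ) := by
              have := hpj ▸ Nat.pow_log_le_self 2 (show p.2 ≠ 0 by omega)
              exact_mod_cast this
          _ ≤ W := hhi
    set m := Nat.ceil (x ^ ((1:ℝ)/3)) with hmdef
    set aa := Nat.log 2 m with haadef
    set b := Nat.log 2 (Nat.floor W) with hbdef
    have hGsub : G ⊆ Finset.Icc (aa - 1) b := by
      intro j hj
      obtain ⟨-, hg1, hg2⟩ := Finset.mem_filter.1 hj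
      refine Finset.mem_Icc.2 ⟨?_, ?_⟩
      · have hm : m ≤ 2^(j+1) := by
          rw [hmdef]
          refine Nat.ceil_le.2 ?_
          push_cast
          exact le_of_lt hg1
        have : aa ≤ j+1 := by
          calc aa ≤ Nat.log 2 (2^(j+1)) := Nat.log_mono_right hm
            _ = j+1 := Nat.log_pow (by norm_num) _
        omega
      · have h2W : (2:ℕ)^j ≤ Nat.floor W := Nat.le_floor (by push_cast; exact hg2)
        have hne : Nat.floor W ≠ 0 := by
          have h1 : (1:ℕ) ≤ 2^j := Nat.one_le_two_pow
          omega
        exact (Nat.le_log_iff_pow_le (by norm_num) hne).2 h2W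
    -- geometric sum bounds
    have hS1 : ∑ j ∈ Finset.Icc (aa-1) b, ((1:ℝ)/2)^j ≤ 8 / x^((1:ℝ)/3) := by
      have e1 : ∑ j ∈ Finset.Icc (aa-1) b, ((1:ℝ)/2)^j ≤ 2 * (1/2)^(aa-1) := by
        rw [← Finset.Ico_add_one_right_eq_Icc, Finset.sum_Ico_eq_sum_range]
        calc ∑ i ∈ Finset.range (b+1-(aa-1)), ((1:ℝ)/2)^((aa-1)+i)
            = (1/2)^(aa-1) * ∑ i ∈ Finset.range (b+1-(aa-1)), ((1:ℝ)/2)^i := by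
              rw [Finset.mul_sum]
              exact Finset.sum_congr rfl fun i _ => by rw [pow_add]
          _ ≤ (1/2)^(aa-1) * 2 :=
              mul_le_mul_of_nonneg_left (sum_geometric_two_le _) (by positivity)
          _ = 2 * (1/2)^(aa-1) := by ring
      have e2 : ((1:ℝ)/2)^(aa-1) ≤ 2 * (1/2)^aa := by
        rcases Nat.eq_zero_or_pos aa with h|h
        · rw [h]; norm_num
        · have hsucc : (aa - 1) + 1 = aa := by omega
          have key : ((1:ℝ)/2)^((aa-1)+1) = (1/2)^(aa-1) * (1/2) := pow_succ _ _
          rw [hsucc] at key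
          linarith
      have e3 : ((1:ℝ)/2)^aa ≤ 2 / x^((1:ℝ)/3) := by
        have hm1 : x^((1:ℝ)/3) ≤ (m:ℝ) := Nat.le_ceil _
        have hm2 : (m:ℝ) < ((2:ℝ))^(aa+1) := by
          exact_mod_cast Nat.lt_pow_succ_log_self (show 1 < 2 by norm_num) m
        have hxp : (0:ℝ) < x^((1:ℝ)/3) := Real.rpow_pos_of_pos hx0 _
        have h2a : (0:ℝ) < (2:ℝ)^aa := by positivity
        rw [show ((1:ℝ)/2)^aa = 1/2^aa by rw [div_pow, one_pow]]
        rw [div_le_div_iff₀ h2a hxp]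
        have hps : (2:ℝ)^(aa+1) = 2^aa * 2 := pow_succ 2 aa
        nlinarith
      have hxp : (0:ℝ) < x^((1:ℝ)/3) := Real.rpow_pos_of_pos hx0 _
      calc ∑ j ∈ Finset.Icc (aa-1) b, ((1:ℝ)/2)^j ≤ 2 * (1/2)^(aa-1) := e1
        _ ≤ 2 * (2 * (1/2)^aa) := by linarith
        _ ≤ 4 * (2 / x^((1:ℝ)/3)) := by linarith
        _ = 8 / x^((1:ℝ)/3) := by ring
    have hS2 : ∑ j ∈ Finset.Icc (aa-1) b, (Real.sqrt 2)^j ≤ (7/2) * Real.sqrt W := by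
      have hsq2 : Real.sqrt 2 ^ 2 = 2 := Real.sq_sqrt (by norm_num)
      have hs2a : (1:ℝ) < Real.sqrt 2 := by
        have h := Real.sqrt_lt_sqrt (by norm_num : (0:ℝ) ≤ 1) (by norm_num : (1:ℝ) < 2)
        simpa using h
      have h14 : (1.4:ℝ) ≤ Real.sqrt 2 :=
        (Real.le_sqrt (by norm_num) (by norm_num)).2 (by norm_num)
      have hsub : Finset.Icc (aa-1) b ⊆ Finset.range (b+1) := by
        intro j hj
        have := (Finset.mem_Icc.1 hj).2
        exact Finset.mem_range.2 (by omega)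
      have e1 : ∑ j ∈ Finset.Icc (aa-1) b, (Real.sqrt 2)^j
          ≤ ∑ j ∈ Finset.range (b+1), (Real.sqrt 2)^j :=
        Finset.sum_le_sum_of_subset_of_nonneg hsub (fun i _ _ => by positivity)
      have e2 : ∑ j ∈ Finset.range (b+1), (Real.sqrt 2)^j
          = ((Real.sqrt 2)^(b+1) - 1)/(Real.sqrt 2 - 1) := geom_sum_eq (ne_of_gt hs2a) _
      have hpb : (1:ℝ) ≤ (Real.sqrt 2)^b := one_le_pow₀ (le_of_lt hs2a)
      have e3 : ((Real.sqrt 2)^(b+1) - 1)/(Real.sqrt 2 - 1) ≤ (7/2) * (Real.sqrt 2)^b := by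
        rw [div_le_iff₀ (by linarith), pow_succ]
        nlinarith
      have e4 : (Real.sqrt 2)^b ≤ Real.sqrt W := by
        rw [← sqrt_two_pow]
        apply Real.sqrt_le_sqrt
        have hfl1 : (1:ℕ) ≤ Nat.floor W := Nat.le_floor (by exact_mod_cast hW1)
        have h2b : (2:ℕ)^b ≤ Nat.floor W := Nat.pow_log_le_self 2 (by omega)
        calc ((2:ℝ))^b = ((2^b:ℕ):ℝ) := by push_cast; ring
          _ ≤ ((Nat.floor W):ℝ) := by exact_mod_cast h2b
          _ ≤ W := Nat.floor_le (by linarith)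
      calc ∑ j ∈ Finset.Icc (aa-1) b, (Real.sqrt 2)^j
          ≤ ((Real.sqrt 2)^(b+1) - 1)/(Real.sqrt 2 - 1) := e1.trans (le_of_eq e2)
        _ ≤ (7/2) * (Real.sqrt 2)^b := e3
        _ ≤ (7/2) * Real.sqrt W := by linarith
    -- assemble
    have hTbound : (T.card : ℝ) ≤ x * (8 / x^((1:ℝ)/3)) + Real.sqrt x * ((7/2) * Real.sqrt W) := by
      calc (T.card:ℝ) = ∑ j ∈ G, (c j : ℝ) := by rw [hTsum, hsum2]; push_cast; rfl
        _ ≤ ∑ j ∈ G, (x*(1/2)^j + Real.sqrt x*(Real.sqrt 2)^j) :=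
            Finset.sum_le_sum (fun j _ => hfb j)
        _ ≤ ∑ j ∈ Finset.Icc (aa-1) b, (x*(1/2)^j + Real.sqrt x*(Real.sqrt 2)^j) :=
            Finset.sum_le_sum_of_subset_of_nonneg hGsub (fun j _ _ => by positivity)
        _ = x * (∑ j ∈ Finset.Icc (aa-1) b, ((1:ℝ)/2)^j)
            + Real.sqrt x * (∑ j ∈ Finset.Icc (aa-1) b, (Real.sqrt 2)^j) := by
            rw [Finset.sum_add_distrib, Finset.mul_sum, Finset.mul_sum]
        _ ≤ x * (8 / x^((1:ℝ)/3)) + Real.sqrt x * ((7/2) * Real.sqrt W) :=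
            add_le_add (mul_le_mul_of_nonneg_left hS1 hx0.le)
              (mul_le_mul_of_nonneg_left hS2 (Real.sqrt_nonneg x))
    have hid1 : x * (8 / x^((1:ℝ)/3)) = 8 * x^((2:ℝ)/3) := by
      rw [show x * (8 / x^((1:ℝ)/3)) = 8 * (x^(1:ℝ) / x^((1:ℝ)/3)) by rw [Real.rpow_one]; ring,
        ← Real.rpow_sub hx0]
      norm_num
    have hid2 : Real.sqrt x * Real.sqrt W = x^((3:ℝ)/4) / D := by
      rw [hWdef, Real.sqrt_div (Real.rpow_nonneg hx0.le _), hsqrtL,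
        Real.sqrt_eq_rpow x, Real.sqrt_eq_rpow (x ^ ((1:ℝ)/2)), ← Real.rpow_mul hx0.le,
        mul_div_assoc', ← Real.rpow_add hx0]
      norm_num
    have hfinal : 8 * x^((2:ℝ)/3) ≤ (13/2) * (x^((3:ℝ)/4) / D) := by
      have hx23 : x^((3:ℝ)/4) = x^((2:ℝ)/3) * x^((1:ℝ)/12) := by
        rw [← Real.rpow_add hx0]; norm_num
      rw [mul_div_assoc', le_div_iff₀ hD0]
      have hp1 : (0:ℝ) < x^((2:ℝ)/3) := Real.rpow_pos_of_pos hx0 _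
      nlinarith [hlog2, hp1, Real.rpow_pos_of_pos hx0 ((1:ℝ)/12)]
    calc (S.ncard : ℝ) ≤ (T.card : ℝ) := by exact_mod_cast hST
      _ ≤ x * (8 / x^((1:ℝ)/3)) + Real.sqrt x * ((7/2) * Real.sqrt W) := hTbound
      _ = 8 * x^((2:ℝ)/3) + (7/2) * (x^((3:ℝ)/4) / D) := by
          rw [hid1, show Real.sqrt x * ((7/2) * Real.sqrt W)
            = (7/2) * (Real.sqrt x * Real.sqrt W) by ring, hid2]
      _ ≤ (13/2) * (x^((3:ℝ)/4) / D) + (7/2) * (x^((3:ℝ)/4) / D) := by linarith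
      _ = 10 * x^((3:ℝ)/4) / D := by ring
  apply main
  rintro a ⟨⟨hA, hIcc⟩, u, v, hu, hv, hauv, hvu, hlo, hhi⟩
  exact ⟨u, v, hu, hv, hauv, hvu, hauv ▸ hA, by rw [← hauv]; exact hIcc.2, hlo, hhi⟩
end

section
/- Let A be a multiplicative Sidon set of positive integers. Then for every positive integer n, |A^{**}(n)| ≤ (∑_{n^{2/3} < p ≤ n} χ_{A,n}(p)) + 4·n^{2/3}, where the sum ranges over primes p with n^{2/3} < p ≤ n. -/
theorem stmt_8 (A : Set ℕ) (hpos : ∀ a ∈ A, 0 < a) (hS : MulSidon A) (n : ℕ) (hn : 0 < n) :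
    (Nat.card {a : ℕ | a ∈ A ∩ Set.Icc 1 n ∧ ∃ u v : ℕ, 0 < u ∧ 0 < v ∧ a = u * v ∧ v ≤ u ∧
        (v : ℝ) ≤ (n : ℝ) ^ ((1 : ℝ) / 3) ∧
        ((u : ℝ) ≤ (n : ℝ) ^ ((2 : ℝ) / 3) ∨ u.Prime)} : ℝ)
      ≤ (Nat.card {p : ℕ | p.Prime ∧ (n : ℝ) ^ ((2 : ℝ) / 3) < (p : ℝ) ∧ p ≤ n ∧
          ∃ a ∈ A ∩ Set.Icc 1 n, p ∣ a} : ℝ) + 4 * (n : ℝ) ^ ((2 : ℝ) / 3) := by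
  classical
  set n13 : ℝ := (n : ℝ) ^ ((1 : ℝ) / 3) with hn13
  set n23 : ℝ := (n : ℝ) ^ ((2 : ℝ) / 3) with hn23
  have hn0 : (0:ℝ) < (n:ℝ) := by exact_mod_cast hn
  have hn23nonneg : (0:ℝ) ≤ n23 := Real.rpow_nonneg hn0.le _
  have hn13nonneg : (0:ℝ) ≤ n13 := Real.rpow_nonneg hn0.le _
  have hmul : n13 * n13 = n23 := by
    rw [hn13, hn23, ← Real.rpow_add hn0]; norm_num
  -- the predicate on a
  set Q : ℕ → ℕ × ℕ → Prop := fun a e => 0 < e.1 ∧ 0 < e.2 ∧ a = e.1 * e.2 ∧ e.2 ≤ e.1 ∧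
      (e.2 : ℝ) ≤ n13 ∧ ((e.1 : ℝ) ≤ n23 ∨ e.1.Prime) with hQ
  set S : Finset ℕ := (Finset.Icc 1 n).filter (fun a => a ∈ A ∧ ∃ e : ℕ × ℕ, Q a e) with hSdef
  -- LHS set equals ↑S
  have hLHS : {a : ℕ | a ∈ A ∩ Set.Icc 1 n ∧ ∃ u v : ℕ, 0 < u ∧ 0 < v ∧ a = u * v ∧ v ≤ u ∧
      (v : ℝ) ≤ n13 ∧ ((u : ℝ) ≤ n23 ∨ u.Prime)} = (↑S : Set ℕ) := by
    ext a
    simp only [hSdef, Finset.coe_filter, Set.mem_setOf_eq, Finset.mem_Icc, Set.mem_inter_iff,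
      Set.mem_Icc, hQ]
    constructor
    · rintro ⟨⟨haA, h1, h2⟩, u, v, hu, hv, hprod, hle, hv13, hor⟩
      exact ⟨⟨h1, h2⟩, haA, ⟨(u, v), hu, hv, hprod, hle, hv13, hor⟩⟩
    · rintro ⟨⟨h1, h2⟩, haA, ⟨⟨u, v⟩, hu, hv, hprod, hle, hv13, hor⟩⟩
      exact ⟨⟨haA, h1, h2⟩, u, v, hu, hv, hprod, hle, hv13, hor⟩
  -- choice function
  have hchoice : ∀ a ∈ S, Q a (if h : ∃ e : ℕ × ℕ, Q a e then h.choose else (a, 1)) := by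
    intro a ha
    rw [hSdef, Finset.mem_filter] at ha
    obtain ⟨-, -, he⟩ := ha
    rw [dif_pos he]
    exact he.choose_spec
  set f : ℕ → ℕ × ℕ := fun a => if h : ∃ e : ℕ × ℕ, Q a e then h.choose else (a, 1) with hf
  set T : Finset (ℕ × ℕ) := S.image f with hT
  -- properties of edges
  have hedge : ∀ e ∈ T, 0 < e.1 ∧ 0 < e.2 ∧ e.1 * e.2 ∈ A ∧ e.1 * e.2 ≤ n ∧
      (e.2 : ℝ) ≤ n13 ∧ ((e.1 : ℝ) ≤ n23 ∨ e.1.Prime) := by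
    intro e he
    rw [hT, Finset.mem_image] at he
    obtain ⟨a, ha, rfl⟩ := he
    have hq := hchoice a ha
    rw [hSdef, Finset.mem_filter, Finset.mem_Icc] at ha
    obtain ⟨⟨-, han⟩, haA, -⟩ := ha
    obtain ⟨h1, h2, h3, h4, h5, h6⟩ := hq
    exact ⟨h1, h2, h3 ▸ haA, h3 ▸ han, h5, h6⟩
  have hST : S.card = T.card := by
    rw [hT]
    refine (Finset.card_image_of_injOn ?_).symm
    intro a ha b hb hab
    have hqa := hchoice a ha
    have hqb := hchoice b hb
    rw [hqa.2.2.1, hqb.2.2.1]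
    exact congrArg (fun e : ℕ × ℕ => e.1 * e.2) hab
  -- C4-freeness
  have hC4 : ∀ u u' v v' : ℕ, (u, v) ∈ T → (u, v') ∈ T → (u', v) ∈ T → (u', v') ∈ T →
      v ≠ v' → u = u' := by
    intro u u' v v' h1 h2 h3 h4 hvv
    obtain ⟨hu0, hv0, hA1, -⟩ := hedge _ h1
    obtain ⟨-, hv'0, hA2, -⟩ := hedge _ h2
    obtain ⟨hu'0, -, hA3, -⟩ := hedge _ h3
    obtain ⟨-, -, hA4, -⟩ := hedge _ h4
    have := hS (u * v) hA1 (u' * v') hA4 (u * v') hA2 (u' * v) hA3 (by ring)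
    rcases this with ⟨h, -⟩ | ⟨h, -⟩
    · exact absurd (Nat.eq_of_mul_eq_mul_left hu0 h) hvv
    · exact Nat.eq_of_mul_eq_mul_right hv0 h
  set U : Finset ℕ := T.image Prod.fst with hU
  set V : Finset ℕ := T.image Prod.snd with hV
  set m : ℕ → ℕ := fun u => sInf {v | (u, v) ∈ T} with hm
  have hmmem : ∀ e ∈ T, (e.1, m e.1) ∈ T := by
    intro e he
    have : {v | (e.1, v) ∈ T}.Nonempty := ⟨e.2, he⟩
    exact Nat.sInf_mem this
  -- injection T → U ⊕ V × V
  have hTcard : T.card ≤ U.card + V.card * V.card := by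
    have := Finset.card_le_card_of_injOn
      (fun e : ℕ × ℕ => if e.2 = m e.1 then Sum.inl e.1 else Sum.inr (m e.1, e.2))
      (s := T) (t := U.disjSum (V ×ˢ V)) ?_ ?_
    · simpa [Finset.card_disjSum, Finset.card_product] using this
    · intro e he
      by_cases h : e.2 = m e.1
      · simp only [h, if_pos rfl]
        exact Finset.inl_mem_disjSum.2 (Finset.mem_image.2 ⟨e, he, rfl⟩)
      · simp only [if_neg h]
        refine Finset.inr_mem_disjSum.2 (Finset.mem_product.2 ⟨?_, ?_⟩)
        · exact Finset.mem_image.2 ⟨(e.1, m e.1), hmmem e he, rfl⟩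
        · exact Finset.mem_image.2 ⟨e, he, rfl⟩
    · intro e he' e' he'' heq
      have he : e ∈ T := Finset.mem_coe.mp he'
      have he' : e' ∈ T := Finset.mem_coe.mp he''
      by_cases h : e.2 = m e.1 <;> by_cases h' : e'.2 = m e'.1 <;>
        simp only [h, h', if_pos, if_neg, if_true, reduceIte] at heq
      · have h1 : e.1 = e'.1 := Sum.inl.inj heq
        exact Prod.ext h1 (by rw [h, h', h1])
      · exact absurd heq (by simp)
      · exact absurd heq (by simp)
      · obtain ⟨h1, h2⟩ := Prod.mk.inj (Sum.inr.inj heq)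
        have huu : e.1 = e'.1 := by
          refine hC4 e.1 e'.1 (m e.1) e.2 (hmmem e he) ?_ ?_ ?_ ?_
          · simpa using he
          · rw [h1]; exact hmmem e' he'
          · rw [h2]; simpa using he'
          · exact fun hc => h hc.symm
        exact Prod.ext huu h2
  -- the prime finset
  set P : Finset ℕ := (Finset.Icc 1 n).filter (fun p => p.Prime ∧ n23 < (p:ℝ) ∧ p ≤ n ∧
      ∃ a ∈ A ∩ Set.Icc 1 n, p ∣ a) with hPdef
  have hRHS : {p : ℕ | p.Prime ∧ n23 < (p:ℝ) ∧ p ≤ n ∧ ∃ a ∈ A ∩ Set.Icc 1 n, p ∣ a}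
      = (↑P : Set ℕ) := by
    ext p
    simp only [hPdef, Finset.coe_filter, Set.mem_setOf_eq, Finset.mem_Icc]
    constructor
    · rintro ⟨hp, hlt, hle, ha⟩
      exact ⟨⟨hp.one_lt.le, hle⟩, hp, hlt, hle, ha⟩
    · rintro ⟨-, h⟩
      exact h
  -- bound on U
  have hUcard : U.card ≤ P.card + Nat.floor n23 := by
    have hsplit := Finset.card_filter_add_card_filter_not
      (s := U) (p := fun u : ℕ => (u:ℝ) ≤ n23)
    have h1 : U.filter (fun u : ℕ => ¬ (u:ℝ) ≤ n23) ⊆ P := by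
      intro u hu
      rw [Finset.mem_filter] at hu
      obtain ⟨huU, hnot⟩ := hu
      rw [hU, Finset.mem_image] at huU
      obtain ⟨e, he, rfl⟩ := huU
      obtain ⟨h1, h2, hA1, h4, -, h6⟩ := hedge e he
      have hprime : e.1.Prime := h6.resolve_left hnot
      have hlt : n23 < (e.1:ℝ) := lt_of_not_ge hnot
      have hun : e.1 ≤ n := le_trans (Nat.le_mul_of_pos_right _ h2) h4
      rw [hPdef, Finset.mem_filter, Finset.mem_Icc]
      refine ⟨⟨hprime.one_lt.le, hun⟩, hprime, hlt, hun, e.1 * e.2, ⟨hA1, ?_, h4⟩, ⟨e.2, rfl⟩⟩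
      exact Nat.one_le_iff_ne_zero.2 (by positivity)
    have h2 : U.filter (fun u : ℕ => (u:ℝ) ≤ n23) ⊆ Finset.Icc 1 (Nat.floor n23) := by
      intro u hu
      rw [Finset.mem_filter] at hu
      obtain ⟨huU, hle⟩ := hu
      rw [hU, Finset.mem_image] at huU
      obtain ⟨e, he, rfl⟩ := huU
      obtain ⟨h1, -⟩ := hedge e he
      exact Finset.mem_Icc.2 ⟨h1, Nat.le_floor hle⟩
    calc U.card = (U.filter (fun u : ℕ => (u:ℝ) ≤ n23)).card
          + (U.filter (fun u : ℕ => ¬ (u:ℝ) ≤ n23)).card := hsplit.symm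
      _ ≤ Nat.floor n23 + P.card := by
          refine Nat.add_le_add ?_ (Finset.card_le_card h1)
          calc (U.filter (fun u : ℕ => (u:ℝ) ≤ n23)).card ≤ (Finset.Icc 1 (Nat.floor n23)).card :=
                Finset.card_le_card h2
            _ = Nat.floor n23 := by rw [Nat.card_Icc]; omega
      _ = P.card + Nat.floor n23 := Nat.add_comm _ _
  -- bound on V
  have hVcard : V.card ≤ Nat.floor n13 := by
    have hsub : V ⊆ Finset.Icc 1 (Nat.floor n13) := by
      intro v hv
      rw [hV, Finset.mem_image] at hv
      obtain ⟨e, he, rfl⟩ := hv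
      obtain ⟨-, h2, -, -, h5, -⟩ := hedge e he
      exact Finset.mem_Icc.2 ⟨h2, Nat.le_floor h5⟩
    calc V.card ≤ (Finset.Icc 1 (Nat.floor n13)).card := Finset.card_le_card hsub
      _ = Nat.floor n13 := by rw [Nat.card_Icc]; omega
  -- put everything together
  rw [hLHS, hRHS, Nat.card_coe_set_eq, Nat.card_coe_set_eq,
    Set.ncard_coe_finset, Set.ncard_coe_finset]
  have hfloor23 : (Nat.floor n23 : ℝ) ≤ n23 := Nat.floor_le hn23nonneg
  have hfloor13 : (Nat.floor n13 : ℝ) ≤ n13 := Nat.floor_le hn13nonneg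
  have hU' : (U.card:ℝ) ≤ (P.card:ℝ) + (Nat.floor n23:ℝ) := by exact_mod_cast hUcard
  have hV' : (V.card:ℝ) ≤ (Nat.floor n13:ℝ) := by exact_mod_cast hVcard
  have hT' : (S.card:ℝ) ≤ (U.card:ℝ) + (V.card:ℝ) * (V.card:ℝ) := by
    rw [hST]; exact_mod_cast hTcard
  nlinarith [Nat.cast_nonneg (α := ℝ) V.card, Nat.cast_nonneg (α := ℝ) (Nat.floor n13),
    mul_le_mul hV' hV' (Nat.cast_nonneg _) (Nat.cast_nonneg _),
    mul_le_mul hfloor13 hfloor13 (Nat.cast_nonneg _) hn13nonneg]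
end

section
/- Let A be a set of positive integers. Then for all sufficiently large n, A(n) \ (A_6^{*}(n) ∪ A^{**}(n)) ⊆ A₁(n) ∪ A₂(n). -/
/-- `a` has a decomposition witnessing membership in `A₆^*(n)`:
`a = u * v` with `v ≤ u` and `n^{1/3} ≤ v ≤ n^{1/2} / (log n)^6`. -/
def AStarSixCond (n a : ℕ) : Prop :=
  ∃ u v : ℕ, 0 < u ∧ 0 < v ∧ a = u * v ∧ v ≤ u ∧
    (n : ℝ) ^ ((1 : ℝ) / 3) ≤ (v : ℝ) ∧ (v : ℝ) ≤ (n : ℝ) ^ ((1 : ℝ) / 2) / (Real.log n) ^ 6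

/-- `a` has a decomposition witnessing membership in `A^{**}(n)`:
`a = u * v` with `v ≤ u`, `v ≤ n^{1/3}`, and `u ≤ n^{2/3}` or `u` prime. -/
def AStarStarCond (n a : ℕ) : Prop :=
  ∃ u v : ℕ, 0 < u ∧ 0 < v ∧ a = u * v ∧ v ≤ u ∧
    (v : ℝ) ≤ (n : ℝ) ^ ((1 : ℝ) / 3) ∧ ((u : ℝ) ≤ (n : ℝ) ^ ((2 : ℝ) / 3) ∨ u.Prime)

/-- `a` has a decomposition witnessing membership in `A₁(n)`:
`a = d * p_i * p_{i+1} * ⋯ * p_s` with `d ≤ (log n)^{12}` and primes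
`n^{1/6}/(log n)^6 ≤ p_i ≤ ⋯ ≤ p_s ≤ n^{1/2} (log n)^6`. -/
def AOneCond (n a : ℕ) : Prop :=
  ∃ d : ℕ, 0 < d ∧ (d : ℝ) ≤ (Real.log n) ^ 12 ∧
    ∃ P : Multiset ℕ, P ≠ 0 ∧
      (∀ p ∈ P, Nat.Prime p ∧ (n : ℝ) ^ ((1 : ℝ) / 6) / (Real.log n) ^ 6 ≤ (p : ℝ) ∧
        (p : ℝ) ≤ (n : ℝ) ^ ((1 : ℝ) / 2) * (Real.log n) ^ 6) ∧
      a = d * P.prod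

/-- `a` has a decomposition witnessing membership in `A₂(n)`:
`a ≥ n/(log n)^{12}` and `a = d * p_{s-3} * p_{s-2} * p_{s-1} * p_s` with `d ≤ (log n)^{12}`
and primes `n^{1/4}/(log n)^9 ≤ p_{s-3} ≤ p_{s-2} ≤ p_{s-1} ≤ p_s ≤ n^{1/4} (log n)^9`. -/
def ATwoCond (n a : ℕ) : Prop :=
  (n : ℝ) / (Real.log n) ^ 12 ≤ (a : ℝ) ∧
    ∃ d p₁ p₂ p₃ p₄ : ℕ, 0 < d ∧ (d : ℝ) ≤ (Real.log n) ^ 12 ∧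
      p₁.Prime ∧ p₂.Prime ∧ p₃.Prime ∧ p₄.Prime ∧
      p₁ ≤ p₂ ∧ p₂ ≤ p₃ ∧ p₃ ≤ p₄ ∧
      (n : ℝ) ^ ((1 : ℝ) / 4) / (Real.log n) ^ 9 ≤ (p₁ : ℝ) ∧
      (p₄ : ℝ) ≤ (n : ℝ) ^ ((1 : ℝ) / 4) * (Real.log n) ^ 9 ∧
      a = d * (p₁ * p₂ * p₃ * p₄)



lemma myFilterProd (l : List ℕ) (p : ℕ → Bool) :
    (l.filter p).prod * (l.filter (fun x => !(p x))).prod = l.prod := by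
  induction l with
  | nil => simp
  | cons q t ih =>
    by_cases h : p q
    · simp only [List.filter_cons, h, List.prod_cons, ite_true, Bool.not_true]
      simp only [if_neg (by simp : ¬(false = true))]
      rw [mul_assoc, ih]
    · simp only [List.filter_cons, h, List.prod_cons, Bool.not_false]
      rw [if_neg (by simp [h]), if_pos (by simp), List.prod_cons]
      rw [← ih]; ring

lemma myTwoLle {n : ℕ} (hn : (2 * 72 ^ 6) ^ 12 ≤ n) :
    2 * (Real.log n) ^ 6 ≤ (n : ℝ) ^ ((1 : ℝ) / 6) := by
  have hn1 : 1 ≤ n := le_trans (by norm_num) hn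
  have hXpos : (0 : ℝ) < n := by exact_mod_cast hn1
  have hX1 : (1 : ℝ) ≤ n := by exact_mod_cast hn1
  have hy : (0 : ℝ) < (n : ℝ) ^ ((1 : ℝ) / 72) := Real.rpow_pos_of_pos hXpos _
  have hlog : Real.log n ≤ 72 * (n : ℝ) ^ ((1 : ℝ) / 72) := by
    have h1 : Real.log ((n : ℝ) ^ ((1 : ℝ) / 72)) = (1 / 72) * Real.log n :=
      Real.log_rpow hXpos _
    have h2 : Real.log ((n : ℝ) ^ ((1 : ℝ) / 72)) ≤ (n : ℝ) ^ ((1 : ℝ) / 72) - 1 :=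
      Real.log_le_sub_one_of_pos hy
    nlinarith
  have hlog0 : 0 ≤ Real.log n := Real.log_nonneg hX1
  have h6 : (Real.log n) ^ 6 ≤ (72 * (n : ℝ) ^ ((1 : ℝ) / 72)) ^ 6 :=
    pow_le_pow_left₀ hlog0 hlog 6
  have hid : ((n : ℝ) ^ ((1 : ℝ) / 72)) ^ (6 : ℕ) = (n : ℝ) ^ ((1 : ℝ) / 12) := by
    rw [← Real.rpow_natCast ((n : ℝ) ^ ((1 : ℝ) / 72)) 6, ← Real.rpow_mul hXpos.le]
    norm_num
  have hX112 : (2 * 72 ^ 6 : ℝ) ≤ (n : ℝ) ^ ((1 : ℝ) / 12) := by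
    have hbase : ((2 * 72 ^ 6 : ℝ)) ^ (12 : ℕ) ≤ (n : ℝ) := by exact_mod_cast hn
    have : (2 * 72 ^ 6 : ℝ) = (((2 * 72 ^ 6 : ℝ)) ^ (12 : ℕ)) ^ ((1 : ℝ) / 12) := by
      rw [← Real.rpow_natCast (2 * 72 ^ 6 : ℝ) 12, ← Real.rpow_mul (by positivity)]
      norm_num
    rw [this]
    exact Real.rpow_le_rpow (by positivity) hbase (by norm_num)
  have hid2 : (n : ℝ) ^ ((1 : ℝ) / 12) * (n : ℝ) ^ ((1 : ℝ) / 12) = (n : ℝ) ^ ((1 : ℝ) / 6) := by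
    rw [← Real.rpow_add hXpos]; norm_num
  have h72 : (72 * (n : ℝ) ^ ((1 : ℝ) / 72)) ^ 6 = 72 ^ 6 * (n : ℝ) ^ ((1 : ℝ) / 12) := by
    rw [mul_pow, hid]
  nlinarith [Real.rpow_pos_of_pos hXpos ((1 : ℝ) / 12)]

lemma myStayLow (X L : ℝ) (a : ℕ) (hXpos : 0 < X) (hL0 : 0 < L) (haX : (a : ℝ) ≤ X)
    (hzlow : ∀ v : ℕ, v ∣ a → (a : ℝ) ≤ (v : ℝ) * X ^ ((2 : ℝ) / 3) →
      X ^ ((1 : ℝ) / 2) < (v : ℝ) * L) :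
    ∀ sl : List ℕ, (∀ q ∈ sl, (q : ℝ) * L ≤ X ^ ((1 : ℝ) / 6)) →
    ∀ b : ℕ, b * sl.prod ∣ a → (b : ℝ) * X ^ ((2 : ℝ) / 3) < a →
    ((b * sl.prod : ℕ) : ℝ) * X ^ ((2 : ℝ) / 3) < a := by
  intro sl
  induction sl with
  | nil => intro _ b _ hb; simpa using hb
  | cons q t ih =>
    intro hq b hd hb
    have e1 : X ^ ((1 : ℝ) / 6) * X ^ ((1 : ℝ) / 2) = X ^ ((2 : ℝ) / 3) := by
      rw [← Real.rpow_add hXpos]; norm_num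
    have e2 : X ^ ((1 : ℝ) / 2) * X ^ ((1 : ℝ) / 2) = X := by
      rw [← Real.rpow_add hXpos]; norm_num
    have hp2 : (0 : ℝ) < X ^ ((1 : ℝ) / 2) := Real.rpow_pos_of_pos hXpos _
    have hd' : (b * q) * t.prod ∣ a := by
      have : b * (q :: t).prod = (b * q) * t.prod := by
        rw [List.prod_cons]; ring
      rwa [this] at hd
    have hqL : (q : ℝ) * L ≤ X ^ ((1 : ℝ) / 6) := hq q (List.mem_cons_self)
    have hb0 : (0 : ℝ) ≤ (b : ℝ) := Nat.cast_nonneg b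
    have hbq : ((b * q : ℕ) : ℝ) * X ^ ((2 : ℝ) / 3) < a := by
      by_contra hcon
      push_neg at hcon
      have h1 := hzlow (b * q) (dvd_trans (Dvd.intro _ rfl) hd') hcon
      -- show (b*q)*L < X^{1/2} for contradiction
      have key : ((b * q : ℕ) : ℝ) * L * X ^ ((1 : ℝ) / 2) < X := by
        push_cast
        calc (b : ℝ) * q * L * X ^ ((1 : ℝ) / 2)
            ≤ (b : ℝ) * (X ^ ((1 : ℝ) / 6) * X ^ ((1 : ℝ) / 2)) := by
              nlinarith [mul_le_mul_of_nonneg_right (mul_le_mul_of_nonneg_left hqL hb0) hp2.le]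
          _ = (b : ℝ) * X ^ ((2 : ℝ) / 3) := by rw [e1]
          _ < a := hb
          _ ≤ X := haX
      have key2 : ((b * q : ℕ) : ℝ) * L * X ^ ((1 : ℝ) / 2) < X ^ ((1 : ℝ) / 2) * X ^ ((1 : ℝ) / 2) := by
        rw [e2]; exact key
      have : ((b * q : ℕ) : ℝ) * L < X ^ ((1 : ℝ) / 2) :=
        lt_of_mul_lt_mul_right key2 hp2.le
      exact absurd h1 (not_lt.mpr this.le)
    have := ih (fun r hr => hq r (List.mem_cons_of_mem q hr)) (b * q) hd' hbq
    have e3 : (b * q) * t.prod = b * (q :: t).prod := by rw [List.prod_cons]; ring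
    rwa [e3] at this

set_option maxHeartbeats 1000000 in
lemma myWalk (X L : ℝ) (a : ℕ) (hXpos : 0 < X) (hX23 : 1 < X ^ ((2 : ℝ) / 3)) (hL0 : 0 < L)
    (hLX : 2 * L ≤ X ^ ((1 : ℝ) / 6)) (haX : (a : ℝ) ≤ X)
    (hzlow : ∀ v : ℕ, v ∣ a → (a : ℝ) ≤ (v : ℝ) * X ^ ((2 : ℝ) / 3) →
      X ^ ((1 : ℝ) / 2) < (v : ℝ) * L)
    (hzhigh : ∀ v : ℕ, v ∣ a → (a : ℝ) * L ≤ (v : ℝ) * X ^ ((1 : ℝ) / 2) →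
      X ^ ((2 : ℝ) / 3) < (v : ℝ)) :
    ∀ m : List ℕ, m.Pairwise (· ≤ ·) → (∀ p ∈ m, 0 < p ∧ (p : ℝ) ≤ X ^ ((1 : ℝ) / 2) * L) →
    ∀ b : ℕ, 0 < b → b * m.prod = a → (b : ℝ) * X ^ ((2 : ℝ) / 3) < a →
    ∃ w : ℕ, w ∣ a ∧ b ∣ w ∧ X ^ ((1 : ℝ) / 2) < (w : ℝ) * L ∧
      (w : ℝ) * X ^ ((1 : ℝ) / 2) < (a : ℝ) * L := by
  intro m
  induction m with
  | nil =>
    intro _ _ b hb hprod hinv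
    exfalso
    simp only [List.prod_nil, mul_one] at hprod
    subst hprod
    have hb1 : (1 : ℝ) ≤ (b : ℝ) := by exact_mod_cast hb
    nlinarith
  | cons p t ih =>
    intro hsort hmem b hb hprod hinv
    have e1 : X ^ ((1 : ℝ) / 6) * X ^ ((1 : ℝ) / 2) = X ^ ((2 : ℝ) / 3) := by
      rw [← Real.rpow_add hXpos]; norm_num
    have e2 : X ^ ((2 : ℝ) / 3) * X ^ ((2 : ℝ) / 3) = X * X ^ ((1 : ℝ) / 3) := by
      rw [← Real.rpow_add hXpos, show (2 : ℝ) / 3 + 2 / 3 = 1 + 1 / 3 by norm_num,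
        Real.rpow_add hXpos, Real.rpow_one]
    have e4 : X ^ ((2 : ℝ) / 3) * X ^ ((1 : ℝ) / 3) = X := by
      rw [← Real.rpow_add hXpos]; norm_num
    have hp2 : (0 : ℝ) < X ^ ((1 : ℝ) / 2) := Real.rpow_pos_of_pos hXpos _
    have hp3 : (0 : ℝ) < X ^ ((1 : ℝ) / 3) := Real.rpow_pos_of_pos hXpos _
    have hp23 : (0 : ℝ) < X ^ ((2 : ℝ) / 3) := Real.rpow_pos_of_pos hXpos _
    have hppos : 0 < p := (hmem p (List.mem_cons_self)).1
    have hpbound : (p : ℝ) ≤ X ^ ((1 : ℝ) / 2) * L := (hmem p (List.mem_cons_self)).2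
    have hprod' : (b * p) * t.prod = a := by
      rw [← hprod, List.prod_cons]; ring
    have htpos : 0 < t.prod := by
      rw [CanonicallyOrderedAdd.list_prod_pos]
      exact fun x hx => (hmem x (List.mem_cons_of_mem p hx)).1
    have hapos : (0 : ℝ) < a := by
      have : 0 < a := hprod' ▸ Nat.mul_pos (Nat.mul_pos hb hppos) htpos
      exact_mod_cast this
    by_cases hc : ((b * p : ℕ) : ℝ) * X ^ ((2 : ℝ) / 3) < a
    · obtain ⟨w, h1, h2, h3, h4⟩ := ih hsort.of_cons
        (fun r hr => hmem r (List.mem_cons_of_mem p hr)) (b * p)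
        (Nat.mul_pos hb hppos) hprod' hc
      exact ⟨w, h1, dvd_trans (dvd_mul_right b p) h2, h3, h4⟩
    · push_neg at hc
      have hdvd : (b * p) ∣ a := ⟨t.prod, hprod'.symm⟩
      have hwlow := hzlow (b * p) hdvd hc
      refine ⟨b * p, hdvd, dvd_mul_right b p, hwlow, ?_⟩
      by_contra hcon
      push_neg at hcon
      have hbig := hzhigh (b * p) hdvd hcon
      push_cast at hbig hc
      cases t with
      | nil =>
        simp only [List.prod_nil, mul_one] at hprod'
        have ha_eq : (a : ℝ) = (b : ℝ) * p := by exact_mod_cast hprod'.symm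
        -- a X^{2/3} = (b X^{2/3}) p < a p ≤ a X^{1/2} L ⇒ X^{2/3} < X^{1/2} L
        have hX16 : X ^ ((2 : ℝ) / 3) < X ^ ((1 : ℝ) / 2) * L := by
          have hppos' : (0 : ℝ) < p := by exact_mod_cast hppos
          have h1 : (a : ℝ) * X ^ ((2 : ℝ) / 3) < (a : ℝ) * (X ^ ((1 : ℝ) / 2) * L) := by
            calc (a : ℝ) * X ^ ((2 : ℝ) / 3) = ((b : ℝ) * X ^ ((2 : ℝ) / 3)) * p := by
                  rw [ha_eq]; ring
              _ < (a : ℝ) * p := by nlinarith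
              _ ≤ (a : ℝ) * (X ^ ((1 : ℝ) / 2) * L) := by nlinarith
          exact lt_of_mul_lt_mul_left h1 hapos.le
        -- but X^{2/3} = X^{1/6} X^{1/2} ≥ 2 L X^{1/2} > X^{1/2} L : contra
        nlinarith [mul_le_mul_of_nonneg_right hLX hp2.le, hp2, hp23]
      | cons q t2 =>
        have hpq : p ≤ q := (List.pairwise_cons.mp hsort).1 q (List.mem_cons_self)
        have ht2pos : 0 < t2.prod := by
          rw [CanonicallyOrderedAdd.list_prod_pos]
          exact fun x hx => (hmem x (List.mem_cons_of_mem p (List.mem_cons_of_mem q hx))).1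
        obtain ⟨u, hu⟩ : ∃ u, (q :: t2).prod = u := ⟨_, rfl⟩
        rw [hu] at hprod'
        have hupos' : 0 < u := by
          rw [← hu, List.prod_cons]
          exact Nat.mul_pos (hmem q (List.mem_cons_of_mem p (List.mem_cons_self))).1 ht2pos
        have hqu : q ≤ u := by
          rw [← hu, List.prod_cons]; exact Nat.le_mul_of_pos_right q ht2pos
        have hpu : (p : ℝ) ≤ (u : ℝ) := by exact_mod_cast le_trans hpq hqu
        have hupos : (0 : ℝ) < (u : ℝ) := by exact_mod_cast hupos'
        have hueq : ((b : ℝ) * p) * (u : ℝ) = (a : ℝ) := by exact_mod_cast hprod'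
        have hppos' : (0 : ℝ) < (p : ℝ) := by exact_mod_cast hppos
        have hbpos : (0 : ℝ) < (b : ℝ) := by exact_mod_cast hb
        have hi : (u : ℝ) * X ^ ((2 : ℝ) / 3) < a := by
          have h6 : (u : ℝ) * (X ^ ((2 : ℝ) / 3)) < (u : ℝ) * ((b : ℝ) * p) :=
            mul_lt_mul_of_pos_left hbig hupos
          have h7 : (u : ℝ) * ((b : ℝ) * p) = a := by rw [← hueq]; ring
          linarith
        have h5 : X ^ ((2 : ℝ) / 3) * X ^ ((2 : ℝ) / 3) < (p : ℝ) * a := by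
          have A1 : (X ^ ((2 : ℝ) / 3)) * X ^ ((2 : ℝ) / 3) < ((b : ℝ) * p) * X ^ ((2 : ℝ) / 3) :=
            mul_lt_mul_of_pos_right hbig hp23
          have A3 : (p : ℝ) * ((b : ℝ) * X ^ ((2 : ℝ) / 3)) < (p : ℝ) * a :=
            mul_lt_mul_of_pos_left hinv hppos'
          have A2 : ((b : ℝ) * p) * X ^ ((2 : ℝ) / 3) = (p : ℝ) * ((b : ℝ) * X ^ ((2 : ℝ) / 3)) := by
            ring
          linarith
        have hii : X * X ^ ((1 : ℝ) / 3) < (a : ℝ) * p := by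
          rw [← e2]; linarith [h5]
        have e5 : (X * X ^ ((1 : ℝ) / 3)) * X ^ ((2 : ℝ) / 3) = X * X := by
          rw [mul_assoc, mul_comm (X ^ ((1 : ℝ) / 3)), e4]
        have F1 : (X * X ^ ((1 : ℝ) / 3)) * X ^ ((2 : ℝ) / 3) < ((a : ℝ) * p) * X ^ ((2 : ℝ) / 3) :=
          mul_lt_mul_of_pos_right hii hp23
        have F2 : ((a : ℝ) * p) * X ^ ((2 : ℝ) / 3) ≤ ((a : ℝ) * u) * X ^ ((2 : ℝ) / 3) :=
          mul_le_mul_of_nonneg_right (mul_le_mul_of_nonneg_left hpu hapos.le) hp23.le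
        have F3 : (a : ℝ) * ((u : ℝ) * X ^ ((2 : ℝ) / 3)) < (a : ℝ) * a :=
          mul_lt_mul_of_pos_left hi hapos
        have F4 : (a : ℝ) * a ≤ X * X := mul_le_mul haX haX hapos.le hXpos.le
        linarith [e5, F1, F2, F3, F4]

set_option maxHeartbeats 4000000 in
theorem stmt_10 (A : Set ℕ) (hpos : ∀ a ∈ A, 0 < a) :
    ∃ N : ℕ, ∀ n : ℕ, N ≤ n → ∀ a ∈ A ∩ Set.Icc 1 n,
      ¬(AStarSixCond n a ∨ AStarStarCond n a) → (AOneCond n a ∨ ATwoCond n a) := by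
  refine ⟨(2 * 72 ^ 6) ^ 12, fun n hn a ha hnot => ?_⟩
  left
  obtain ⟨haA, haIcc⟩ := ha
  obtain ⟨ha1, han⟩ := haIcc
  push_neg at hnot
  obtain ⟨hnot6, hnotss⟩ := hnot
  set X : ℝ := (n : ℝ) with hXdef
  set L : ℝ := (Real.log n) ^ 6 with hLdef
  have hn3 : 3 ≤ n := le_trans (by norm_num) hn
  have hXpos : (0 : ℝ) < X := by
    rw [hXdef]; exact_mod_cast (by omega : 0 < n)
  have hX1 : (1 : ℝ) ≤ X := by rw [hXdef]; exact_mod_cast (by omega : 1 ≤ n)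
  have hX3 : (3 : ℝ) ≤ X := by rw [hXdef]; exact_mod_cast hn3
  have hlog1 : 1 ≤ Real.log n := by
    rw [Real.le_log_iff_exp_le (by rw [hXdef] at hXpos; exact_mod_cast hXpos)]
    calc Real.exp 1 ≤ 2.7182818286 := Real.exp_one_lt_d9.le
      _ ≤ 3 := by norm_num
      _ ≤ (n : ℝ) := by rw [hXdef] at hX3; exact hX3
  have hL1 : (1 : ℝ) ≤ L := by
    calc (1 : ℝ) = 1 ^ 6 := by norm_num
      _ ≤ L := by rw [hLdef]; exact pow_le_pow_left₀ zero_le_one hlog1 6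
  have hL0 : (0 : ℝ) < L := lt_of_lt_of_le zero_lt_one hL1
  have hLX : 2 * L ≤ X ^ ((1 : ℝ) / 6) := by rw [hLdef, hXdef]; exact myTwoLle hn
  have haX : (a : ℝ) ≤ X := by rw [hXdef]; exact_mod_cast han
  have ha0 : a ≠ 0 := by omega
  have hapos : (0 : ℝ) < (a : ℝ) := by exact_mod_cast (by omega : 0 < a)
  have e13 : X ^ ((1 : ℝ) / 3) * X ^ ((1 : ℝ) / 3) = X ^ ((2 : ℝ) / 3) := by
    rw [← Real.rpow_add hXpos]; norm_num
  have e12 : X ^ ((1 : ℝ) / 2) * X ^ ((1 : ℝ) / 2) = X := by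
    rw [← Real.rpow_add hXpos]; norm_num
  have e1323 : X ^ ((1 : ℝ) / 3) * X ^ ((2 : ℝ) / 3) = X := by
    rw [← Real.rpow_add hXpos]; norm_num
  have hp12 : (0 : ℝ) < X ^ ((1 : ℝ) / 2) := Real.rpow_pos_of_pos hXpos _
  have hp13 : (0 : ℝ) < X ^ ((1 : ℝ) / 3) := Real.rpow_pos_of_pos hXpos _
  have hp23 : (0 : ℝ) < X ^ ((2 : ℝ) / 3) := Real.rpow_pos_of_pos hXpos _
  have h1le13 : (1 : ℝ) ≤ X ^ ((1 : ℝ) / 3) := by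
    calc (1 : ℝ) = X ^ (0 : ℝ) := (Real.rpow_zero X).symm
      _ ≤ X ^ ((1 : ℝ) / 3) := Real.rpow_le_rpow_of_exponent_le hX1 (by norm_num)
  have h1312 : X ^ ((1 : ℝ) / 3) ≤ X ^ ((1 : ℝ) / 2) :=
    Real.rpow_le_rpow_of_exponent_le hX1 (by norm_num)
  have h1223 : X ^ ((1 : ℝ) / 2) ≤ X ^ ((2 : ℝ) / 3) :=
    Real.rpow_le_rpow_of_exponent_le hX1 (by norm_num)
  have hX231 : 1 < X ^ ((2 : ℝ) / 3) :=
    (Real.one_lt_rpow_iff_of_pos hXpos).2 (Or.inl ⟨by linarith, by norm_num⟩)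
  -- basic fact : a > X^{2/3} and a not prime
  have hfa : X ^ ((2 : ℝ) / 3) < (a : ℝ) ∧ ¬ a.Prime := by
    by_contra hcon
    apply hnotss
    refine ⟨a, 1, by omega, one_pos, (mul_one a).symm, by omega, ?_, ?_⟩
    · rw [Nat.cast_one]; exact h1le13
    · rcases le_or_gt (a : ℝ) (X ^ ((2 : ℝ) / 3)) with h | h
      · exact Or.inl h
      · right
        by_contra hnp
        exact hcon ⟨h, hnp⟩
  obtain ⟨hagt, hanp⟩ := hfa
  -- Zone low : no divisor v with a ≤ v X^{2/3} and v L ≤ X^{1/2}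
  have hzlow : ∀ v : ℕ, v ∣ a → (a : ℝ) ≤ (v : ℝ) * X ^ ((2 : ℝ) / 3) →
      X ^ ((1 : ℝ) / 2) < (v : ℝ) * L := by
    intro v hvd hva
    by_contra hcon
    push_neg at hcon
    obtain ⟨u, hu⟩ := hvd
    have hv0 : 0 < v := by
      rcases Nat.eq_zero_or_pos v with h | h
      · exfalso; subst h; rw [Nat.cast_zero, zero_mul] at hva; linarith
      · exact h
    have hu0 : 0 < u := by
      rcases Nat.eq_zero_or_pos u with h | h
      · exfalso; subst h; rw [mul_zero] at hu; exact ha0 hu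
      · exact h
    have hvpos : (0 : ℝ) < v := by exact_mod_cast hv0
    have hvL : (v : ℝ) ≤ X ^ ((1 : ℝ) / 2) / L := (le_div_iff₀ hL0).2 hcon
    have hv23 : (v : ℝ) ≤ X ^ ((2 : ℝ) / 3) := by nlinarith
    rcases le_or_gt (X ^ ((1 : ℝ) / 3)) (v : ℝ) with h3 | h3
    · rcases le_total v u with hvu | huv
      · exact hnot6 ⟨u, v, hu0, hv0, by rw [hu]; ring, hvu, h3, hvL⟩
      · have huv' : (u : ℝ) ≤ (v : ℝ) := by exact_mod_cast huv
        have huL : (u : ℝ) * L ≤ X ^ ((1 : ℝ) / 2) := by nlinarith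
        rcases le_or_gt (X ^ ((1 : ℝ) / 3)) (u : ℝ) with h3u | h3u
        · exact hnot6 ⟨v, u, hv0, hu0, hu, huv, h3u, (le_div_iff₀ hL0).2 huL⟩
        · exact hnotss ⟨v, u, hv0, hu0, hu, huv, h3u.le, Or.inl hv23⟩
    · have hval : (v : ℝ) * (u : ℝ) = a := by exact_mod_cast hu.symm
      have hvu : v ≤ u := by
        by_contra hcon2
        push_neg at hcon2
        have hulv : (u : ℝ) < v := by exact_mod_cast hcon2
        nlinarith
      have hu23 : (u : ℝ) ≤ X ^ ((2 : ℝ) / 3) := by nlinarith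
      exact hnotss ⟨u, v, hu0, hv0, by rw [hu]; ring, hvu, h3.le, Or.inl hu23⟩
  -- Zone high
  have hzhigh : ∀ v : ℕ, v ∣ a → (a : ℝ) * L ≤ (v : ℝ) * X ^ ((1 : ℝ) / 2) →
      X ^ ((2 : ℝ) / 3) < (v : ℝ) := by
    intro v hvd hva
    by_contra hcon
    push_neg at hcon
    obtain ⟨u, hu⟩ := hvd
    have hv0 : 0 < v := by
      rcases Nat.eq_zero_or_pos v with h | h
      · exfalso; subst h; rw [Nat.cast_zero, zero_mul] at hva; nlinarith
      · exact h
    have hvpos : (0 : ℝ) < v := by exact_mod_cast hv0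
    have hval : (v : ℝ) * (u : ℝ) = a := by exact_mod_cast hu.symm
    have hudvd : u ∣ a := ⟨v, by rw [hu]; ring⟩
    have hale : (a : ℝ) ≤ (u : ℝ) * X ^ ((2 : ℝ) / 3) := by
      nlinarith [mul_le_mul_of_nonneg_right hcon (Nat.cast_nonneg u : (0:ℝ) ≤ (u:ℝ))]
    have h1 := hzlow u hudvd hale
    rw [← hval] at hva
    have h2' : (v : ℝ) * ((u : ℝ) * L) ≤ (v : ℝ) * X ^ ((1 : ℝ) / 2) := by linarith
    have h2 : (u : ℝ) * L ≤ X ^ ((1 : ℝ) / 2) := le_of_mul_le_mul_left h2' hvpos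
    linarith
  -- all prime factors at most X^{1/2} L
  have hG4 : ∀ p : ℕ, p.Prime → p ∣ a → (p : ℝ) ≤ X ^ ((1 : ℝ) / 2) * L := by
    intro p pp hpa
    by_contra hcon
    push_neg at hcon
    obtain ⟨v, hv⟩ := hpa
    have hp0 : 0 < p := pp.pos
    have hv0 : 0 < v := by
      rcases Nat.eq_zero_or_pos v with h | h
      · exfalso; rw [h, mul_zero] at hv; exact ha0 hv
      · exact h
    have hvpos : (0 : ℝ) < v := by exact_mod_cast hv0
    have hppos : (0 : ℝ) < p := by exact_mod_cast hp0
    have hval : (p : ℝ) * v = a := by exact_mod_cast hv.symm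
    have hvL : (v : ℝ) * L < X ^ ((1 : ℝ) / 2) := by
      have k1 : (v : ℝ) * (X ^ ((1 : ℝ) / 2) * L) < (v : ℝ) * p :=
        mul_lt_mul_of_pos_left hcon hvpos
      have k2 : (v : ℝ) * L * X ^ ((1 : ℝ) / 2) < X ^ ((1 : ℝ) / 2) * X ^ ((1 : ℝ) / 2) := by
        have e12' : X ^ ((1 : ℝ) / 2) * X ^ ((1 : ℝ) / 2) = X := e12
        linarith [k1, haX, e12']
      exact lt_of_mul_lt_mul_right k2 hp12.le
    have hnle : ¬ ((a : ℝ) ≤ (v : ℝ) * X ^ ((2 : ℝ) / 3)) := fun hle =>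
      absurd (hzlow v ⟨p, by rw [hv]; ring⟩ hle) (not_lt.2 hvL.le)
    push_neg at hnle
    have hv13 : (v : ℝ) < X ^ ((1 : ℝ) / 3) := by
      have k3 : (v : ℝ) * X ^ ((2 : ℝ) / 3) < X ^ ((1 : ℝ) / 3) * X ^ ((2 : ℝ) / 3) := by
        linarith [e1323]
      exact lt_of_mul_lt_mul_right k3 hp23.le
    have hvp : v ≤ p := by
      have hfin : (v : ℝ) < p := by nlinarith
      exact_mod_cast hfin.le
    exact hnotss ⟨p, v, hp0, hv0, hv, hvp, hv13.le, Or.inr pp⟩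
  -- factorization
  classical
  have hlprod : a.primeFactorsList.prod = a := Nat.prod_primeFactorsList ha0
  have hlsort : a.primeFactorsList.Pairwise (· ≤ ·) := (Nat.primeFactorsList_sorted a).pairwise
  set medB : ℕ → Bool := fun p => decide (X ^ ((1 : ℝ) / 6) / L ≤ (p : ℝ)) with hmedB
  set meds : List ℕ := a.primeFactorsList.filter medB with hmeds
  set smalls : List ℕ := a.primeFactorsList.filter (fun x => !(medB x)) with hsmalls
  set d : ℕ := smalls.prod with hd
  have hsplit : d * meds.prod = a := by
    rw [hd, hmeds, hsmalls, mul_comm, myFilterProd _ medB, hlprod]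
  have hsmallmem : ∀ q ∈ smalls, q.Prime ∧ (q : ℝ) * L ≤ X ^ ((1 : ℝ) / 6) := by
    intro q hq
    rw [hsmalls, List.mem_filter] at hq
    obtain ⟨hql, hqb⟩ := hq
    refine ⟨Nat.prime_of_mem_primeFactorsList hql, ?_⟩
    have hqb' : medB q = false := by simpa using hqb
    rw [hmedB] at hqb'
    have hnq : ¬ (X ^ ((1 : ℝ) / 6) / L ≤ (q : ℝ)) := of_decide_eq_false hqb'
    have hlt : (q : ℝ) < X ^ ((1 : ℝ) / 6) / L := not_le.1 hnq
    have := (lt_div_iff₀ hL0).1 hlt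
    linarith
  have hmedmem : ∀ p ∈ meds, p.Prime ∧ X ^ ((1 : ℝ) / 6) / L ≤ (p : ℝ) ∧
      (p : ℝ) ≤ X ^ ((1 : ℝ) / 2) * L := by
    intro p hp
    rw [hmeds, List.mem_filter] at hp
    obtain ⟨hpl, hpb⟩ := hp
    have pp := Nat.prime_of_mem_primeFactorsList hpl
    rw [hmedB] at hpb
    exact ⟨pp, of_decide_eq_true hpb, hG4 p pp (Nat.dvd_of_mem_primeFactorsList hpl)⟩
  have hdpos : 0 < d := by
    rw [hd, CanonicallyOrderedAdd.list_prod_pos]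
    exact fun x hx => (hsmallmem x hx).1.pos
  have hmedsorted : meds.Pairwise (· ≤ ·) := by
    rw [hmeds]
    exact List.Pairwise.sublist List.filter_sublist hlsort
  have hdlow : (d : ℝ) * X ^ ((2 : ℝ) / 3) < a := by
    have h := myStayLow X L a hXpos hL0 haX hzlow smalls
      (fun q hq => (hsmallmem q hq).2) 1
      (by rw [one_mul, ← hd]; exact ⟨meds.prod, hsplit.symm⟩)
      (by rw [Nat.cast_one, one_mul]; exact hagt)
    rw [one_mul, ← hd] at h
    exact h
  obtain ⟨w, hwa, hdw, hw1, hw2⟩ := myWalk X L a hXpos hX231 hL0 hLX haX hzlow hzhigh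
    meds hmedsorted (fun p hp => ⟨(hmedmem p hp).1.pos, (hmedmem p hp).2.2⟩)
    d hdpos hsplit hdlow
  obtain ⟨base, hbase⟩ := hdw
  have hbasedvd : base ∣ a := dvd_trans ⟨d, by rw [hbase]; ring⟩ hwa
  have hbase0 : 0 < base := by
    rcases Nat.eq_zero_or_pos base with h | h
    · exfalso
      rw [h, mul_zero] at hbase
      rw [hbase] at hw1
      rw [Nat.cast_zero, zero_mul] at hw1
      linarith
    · exact h
  have hbR : (0 : ℝ) < base := by exact_mod_cast hbase0
  have hdR : (0 : ℝ) < d := by exact_mod_cast hdpos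
  have hwR : (w : ℝ) = (d : ℝ) * base := by exact_mod_cast hbase
  have hbasehigh : X ^ ((1 : ℝ) / 2) < (base : ℝ) * L := by
    rcases lt_or_ge ((base : ℝ) * X ^ ((2 : ℝ) / 3)) (a : ℝ) with hlt | hge
    · exfalso
      have hbsd : base * smalls.prod ∣ a := by
        rw [← hd, mul_comm, ← hbase]; exact hwa
      have h := myStayLow X L a hXpos hL0 haX hzlow smalls
        (fun q hq => (hsmallmem q hq).2) base hbsd hlt
      rw [← hd, mul_comm base d, ← hbase] at h
      -- h : (w:ℝ) * X^{2/3} < a ; hw1 : X^{1/2} < w L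
      -- X^{1/2} X^{2/3} < (wL) X^{2/3} = (w X^{2/3}) L < a L ≤ X L ≤ X X^{1/6} / 2
      have q1 : X ^ ((1 : ℝ) / 2) * X ^ ((2 : ℝ) / 3) < ((w : ℝ) * L) * X ^ ((2 : ℝ) / 3) :=
        mul_lt_mul_of_pos_right hw1 hp23
      have q2 : ((w : ℝ) * X ^ ((2 : ℝ) / 3)) * L < (a : ℝ) * L := mul_lt_mul_of_pos_right h hL0
      have q3 : (a : ℝ) * L ≤ X * L := mul_le_mul_of_nonneg_right haX hL0.le
      have q4 : X * (2 * L) ≤ X * X ^ ((1 : ℝ) / 6) := mul_le_mul_of_nonneg_left hLX hXpos.le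
      have q5 : X ^ ((1 : ℝ) / 2) * X ^ ((2 : ℝ) / 3) = X * X ^ ((1 : ℝ) / 6) := by
        rw [← Real.rpow_add hXpos, show (1 : ℝ) / 2 + 2 / 3 = 1 + 1 / 6 by norm_num,
          Real.rpow_add hXpos, Real.rpow_one]
      have q6 : (0 : ℝ) < X * X ^ ((1 : ℝ) / 6) := by positivity
      linarith
    · exact hzlow base hbasedvd hge
  have hdbound : (d : ℝ) < L ^ 2 := by
    have k1 : (d : ℝ) * X ^ ((1 : ℝ) / 2) < (w : ℝ) * L := by
      have := mul_lt_mul_of_pos_left hbasehigh hdR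
      rw [hwR]; linarith
    have k2 : (w : ℝ) * L * X ^ ((1 : ℝ) / 2) < (a : ℝ) * L * L :=  by
      have := mul_lt_mul_of_pos_right hw2 hL0
      linarith
    have k4 : (d : ℝ) * X ^ ((1 : ℝ) / 2) * X ^ ((1 : ℝ) / 2) < (w : ℝ) * L * X ^ ((1 : ℝ) / 2) :=
      mul_lt_mul_of_pos_right k1 hp12
    have e12d : (d : ℝ) * (X ^ ((1 : ℝ) / 2) * X ^ ((1 : ℝ) / 2)) = (d : ℝ) * X := by rw [e12]
    have k3 : (d : ℝ) * X < (a : ℝ) * L ^ 2 := by nlinarith [k4, k2, e12d]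
    have k5 : (a : ℝ) * L ^ 2 ≤ X * L ^ 2 :=
      mul_le_mul_of_nonneg_right haX (by positivity)
    nlinarith [hXpos]
  refine ⟨d, hdpos, ?_, (meds : Multiset ℕ), ?_, ?_, ?_⟩
  · have hL12 : L ^ 2 = (Real.log n) ^ 12 := by rw [hLdef]; ring
    linarith [hdbound]
  · rw [Ne, Multiset.coe_eq_zero]
    intro hnil
    rw [hnil] at hsplit
    simp only [List.prod_nil, mul_one] at hsplit
    rw [hsplit] at hdlow
    nlinarith
  · intro p hp
    rw [Multiset.mem_coe] at hp
    obtain ⟨pp, hlo, hhi⟩ := hmedmem p hp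
    exact ⟨pp, by rw [← hXdef, ← hLdef]; exact hlo, by rw [← hXdef, ← hLdef]; exact hhi⟩
  · rw [Multiset.prod_coe]
    exact hsplit.symm
end

section
/- For every positive integer n and every positive integer m with m ≤ n, there exist positive integers u and v such that m = uv, v ≤ u, and either u ≤ n^{2/3} or u is a prime number. -/
lemma aux_cube (n k : ℕ) (h : k ^ 3 ≤ n ^ 2) : (k : ℝ) ≤ (n : ℝ) ^ ((2 : ℝ) / 3) := by
  have h3 : ((n : ℝ) ^ ((2 : ℝ) / 3)) ^ (3 : ℕ) = (n : ℝ) ^ (2 : ℕ) := by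
    rw [← Real.rpow_natCast ((n : ℝ) ^ ((2 : ℝ) / 3)) 3,
      ← Real.rpow_mul (Nat.cast_nonneg n), ← Real.rpow_natCast (n : ℝ) 2]
    norm_num
  have hk3 : ((k : ℝ)) ^ (3 : ℕ) ≤ ((n : ℝ) ^ ((2 : ℝ) / 3)) ^ (3 : ℕ) := by
    rw [h3]; exact_mod_cast h
  exact le_of_pow_le_pow_left₀ (by norm_num) (Real.rpow_nonneg (Nat.cast_nonneg n) _) hk3

theorem stmt_13 (n m : ℕ) (hm : 0 < m) (hmn : m ≤ n) :
    ∃ u v : ℕ, 0 < u ∧ 0 < v ∧ m = u * v ∧ v ≤ u ∧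
      ((u : ℝ) ≤ (n : ℝ) ^ ((2 : ℝ) / 3) ∨ u.Prime) := by
  revert hm hmn
  induction m using Nat.strong_induction_on with
  | _ m ih =>
  intro hm hmn
  by_cases hsmall : (m : ℝ) ≤ (n : ℝ) ^ ((2 : ℝ) / 3)
  · exact ⟨m, 1, hm, one_pos, (mul_one m).symm, hm, Or.inl hsmall⟩
  by_cases hp : m.Prime
  · exact ⟨m, 1, hm, one_pos, (mul_one m).symm, hp.one_lt.le, Or.inr hp⟩
  have hm2 : 2 ≤ m := by
    rcases Nat.lt_or_ge m 2 with h | h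
    · exfalso
      have hm1 : m = 1 := by omega
      apply hsmall
      have hn1 : (1 : ℝ) ≤ (n : ℝ) := by exact_mod_cast (by omega : 1 ≤ n)
      calc (m : ℝ) = 1 := by rw [hm1]; norm_num
        _ = (1 : ℝ) ^ ((2 : ℝ) / 3) := (Real.one_rpow _).symm
        _ ≤ (n : ℝ) ^ ((2 : ℝ) / 3) := Real.rpow_le_rpow (by norm_num) hn1 (by norm_num)
    · exact h
  set p := m.minFac with hpdef
  have hpp : p.Prime := Nat.minFac_prime (by omega)
  have hpd : p ∣ m := Nat.minFac_dvd m
  obtain ⟨m', hmm'⟩ := hpd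
  have hp2 : 2 ≤ p := hpp.two_le
  have hm'pos : 0 < m' := by
    rcases Nat.eq_zero_or_pos m' with h | h
    · subst h; simp at hmm'; omega
    · exact h
  have hm'lt : m' < m := by nlinarith
  have hm'2 : 2 ≤ m' := by
    rcases Nat.lt_or_ge m' 2 with h | h
    · exfalso
      have : m' = 1 := by omega
      rw [this, mul_one] at hmm'
      exact hp (hmm' ▸ hpp)
    · exact h
  obtain ⟨u, v, hu, hv, huv, hvu, hcond⟩ := ih m' hm'lt hm'pos (by omega)
  have hu2 : 2 ≤ u := by nlinarith
  have hudvd : u ∣ m := ⟨v * p, by rw [hmm', huv]; ring⟩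
  have hpu : p ≤ u := Nat.minFac_le_of_dvd hu2 hudvd
  by_cases hcase : p * v ≤ u
  · exact ⟨u, p * v, hu, Nat.mul_pos hpp.pos hv, by rw [hmm', huv]; ring, hcase, hcond⟩
  · refine ⟨p * v, u, Nat.mul_pos hpp.pos hv, hu, by rw [hmm', huv]; ring,
      le_of_lt (lt_of_not_ge hcase), Or.inl ?_⟩
    apply aux_cube
    have hmsq : m ^ 2 ≤ n ^ 2 := Nat.pow_le_pow_left hmn 2
    have hmeq : m = p * (u * v) := by rw [hmm', huv]
    nlinarith [sq_nonneg (p * v), Nat.mul_le_mul hpu hvu]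
end

section
/- Let p be a prime number and α ∈ 𝔽_p. Suppose k₁, k₂, l₁, l₂, m₁, m₂, n₁, n₂ ∈ 𝔽_p satisfy the four equations: k₁k₂ + l₁l₂ + (k₁+k₂)(l₁+l₂) = α; l₁l₂ + m₁m₂ + (l₁+l₂)(m₁+m₂) = α; m₁m₂ + n₁n₂ + (m₁+m₂)(n₁+n₂) = α; n₁n₂ + k₁k₂ + (n₁+n₂)(k₁+k₂) = α. Then {k₁, k₂} = {m₁, m₂} (as unordered pairs) or {l₁, l₂} = {n₁, n₂} (as unordered pairs). -/
lemma pair_eq {p : ℕ} [Fact p.Prime] {a b c d : ZMod p}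
    (hs : a + b = c + d) (hp : a * b = c * d) :
    (a = c ∧ b = d) ∨ (a = d ∧ b = c) := by
  have h : (a - c) * (a - d) = 0 := by linear_combination a * hs - hp
  rcases mul_eq_zero.mp h with h | h
  · left
    have hac : a = c := by linear_combination h
    exact ⟨hac, by linear_combination hs - h⟩
  · right
    have had : a = d := by linear_combination h
    exact ⟨had, by linear_combination hs - h⟩

theorem stmt_17 (p : ℕ) [Fact p.Prime] (α k₁ k₂ l₁ l₂ m₁ m₂ n₁ n₂ : ZMod p)
    (h1 : k₁ * k₂ + l₁ * l₂ + (k₁ + k₂) * (l₁ + l₂) = α)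
    (h2 : l₁ * l₂ + m₁ * m₂ + (l₁ + l₂) * (m₁ + m₂) = α)
    (h3 : m₁ * m₂ + n₁ * n₂ + (m₁ + m₂) * (n₁ + n₂) = α)
    (h4 : n₁ * n₂ + k₁ * k₂ + (n₁ + n₂) * (k₁ + k₂) = α) :
    ((k₁ = m₁ ∧ k₂ = m₂) ∨ (k₁ = m₂ ∧ k₂ = m₁)) ∨
      ((l₁ = n₁ ∧ l₂ = n₂) ∨ (l₁ = n₂ ∧ l₂ = n₁)) := by
  have key : ((l₁ + l₂) - (n₁ + n₂)) * ((k₁ + k₂) - (m₁ + m₂)) = 0 := by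
    linear_combination h1 - h2 + h3 - h4
  rcases mul_eq_zero.mp key with h | h
  · right
    have hs : l₁ + l₂ = n₁ + n₂ := by linear_combination h
    have hp : l₁ * l₂ = n₁ * n₂ := by
      linear_combination h2 - h3 - (m₁ + m₂) * h
    exact pair_eq hs hp
  · left
    have hs : k₁ + k₂ = m₁ + m₂ := by linear_combination h
    have hp : k₁ * k₂ = m₁ * m₂ := by
      linear_combination h1 - h2 - (l₁ + l₂) * h
    exact pair_eq hs hp
end
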